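/- arXiv:1512.09261 — 6 statements merged into one kernel-verified Lean document; each statement's English description precedes it below -/
import Mathlib

section
/- With the network data and classical solution described in the context, for every t ≥ 0 the energy E(t) := (1/2) Σ_{j=1}^{N} ∫₀^{ℓ_j} ( |∂_t y_j(x,t)|² + |∂_x y_j(x,t)|² ) dx + (1/2) Σ_{k ∈ I_M} ( |s_k'(t)|² + |s_k(t)|² ) satisfies the dissipation identity E(0) − E(t) = Σ_{k ∈ I_S} ∫₀^{t} |∂_t y_{j_k}(a_k, τ)|² dτ. In particular E(t) ≤ E(0) for all t ≥ 0. -/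
open Set MeasureTheory intervalIntegral

/-- time partial derivative `∂ₜ f (x, t)` of `f : ℝ → ℝ → ℝ` (first variable `x`). -/
noncomputable def pt (f : ℝ → ℝ → ℝ) (x t : ℝ) : ℝ := deriv (f x) t

/-- second time partial derivative `∂ₜₜ f (x, t)`. -/
noncomputable def ptt (f : ℝ → ℝ → ℝ) (x t : ℝ) : ℝ := deriv (deriv (f x)) t

/-- space partial derivative `∂ₓ f (x, t)`. -/
noncomputable def px (f : ℝ → ℝ → ℝ) (x t : ℝ) : ℝ := deriv (fun ξ => f ξ t) x

/-- second space partial derivative `∂ₓₓ f (x, t)`. -/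
noncomputable def pxx (f : ℝ → ℝ → ℝ) (x t : ℝ) : ℝ := deriv (fun ξ => px f ξ t) x

/-!
Multiplying the wave equation by `∂ₜy` and using `∂ₓ∂ₜy = ∂ₜ∂ₓy` gives the local conservation law
`∂ₜ(|∂ₜy|² + |∂ₓy|²) = ∂ₓ(2 ∂ₜy ∂ₓy)`, so by the divergence theorem on `[0, ℓⱼ] × [0, t]` the energy
of edge `j` changes by twice the time integral of the boundary power `[∂ₜy ∂ₓy]₀^ℓⱼ`; likewise
`(s'² + s²)' = 2 (s'' + s) s'`. Regrouping the boundary powers by vertex, the Dirichlet condition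
kills the root term; at an interior vertex the mass equation gives every incident edge the velocity
`-(s'' + s)`, so the balance condition turns the vertex power into `-(s'' + s) s'`, which cancels
the mass energy; at an exterior vertex the feedback condition leaves `-|∂ₜy|²`.
-/

open Function

noncomputable def boundaryFlux (f : ℝ → ℝ → ℝ) (L τ : ℝ) : ℝ :=
  pt f L τ * px f L τ - pt f 0 τ * px f 0 τ

noncomputable def massPower (s : ℝ → ℝ) (τ : ℝ) : ℝ :=
  (deriv (deriv s) τ + s τ) * deriv s τ

section PartialDerivatives

variable {f : ℝ → ℝ → ℝ} {x t : ℝ}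

lemma pt_eq_fderiv (hf : DifferentiableAt ℝ (uncurry f) (x, t)) :
    pt f x t = fderiv ℝ (uncurry f) (x, t) (0, 1) :=
  (hf.hasFDerivAt.comp_hasDerivAt t ((hasDerivAt_const t x).prodMk (hasDerivAt_id t))).deriv

lemma px_eq_fderiv (hf : DifferentiableAt ℝ (uncurry f) (x, t)) :
    px f x t = fderiv ℝ (uncurry f) (x, t) (1, 0) :=
  (hf.hasFDerivAt.comp_hasDerivAt (f := fun ξ => (ξ, t)) x
    ((hasDerivAt_id' x).prodMk (hasDerivAt_const x t))).deriv

lemma hasDerivAt_pt (hf : DifferentiableAt ℝ (uncurry f) (x, t)) :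
    HasDerivAt (f x) (pt f x t) t :=
  (hf.comp t ((differentiableAt_const x).prodMk differentiableAt_id)).hasDerivAt

lemma hasDerivAt_px (hf : DifferentiableAt ℝ (uncurry f) (x, t)) :
    HasDerivAt (fun ξ => f ξ t) (px f x t) x :=
  (hf.comp (f := fun ξ => (ξ, t)) x
    (differentiableAt_id.prodMk (differentiableAt_const t))).hasDerivAt

lemma uncurry_pt_eq_fderiv (hf : Differentiable ℝ (uncurry f)) :
    uncurry (pt f) = fun p => fderiv ℝ (uncurry f) p (0, 1) :=
  funext fun p => pt_eq_fderiv (hf p)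

lemma uncurry_px_eq_fderiv (hf : Differentiable ℝ (uncurry f)) :
    uncurry (px f) = fun p => fderiv ℝ (uncurry f) p (1, 0) :=
  funext fun p => px_eq_fderiv (hf p)

variable {m n : WithTop ℕ∞}

lemma ContDiff.uncurry_pt (hf : ContDiff ℝ n (uncurry f)) (hmn : m + 1 ≤ n) :
    ContDiff ℝ m (uncurry (pt f)) := by
  rw [uncurry_pt_eq_fderiv (hf.differentiable (by rintro rfl; simp at hmn))]
  exact (hf.fderiv_right hmn).clm_apply contDiff_const

lemma ContDiff.uncurry_px (hf : ContDiff ℝ n (uncurry f)) (hmn : m + 1 ≤ n) :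
    ContDiff ℝ m (uncurry (px f)) := by
  rw [uncurry_px_eq_fderiv (hf.differentiable (by rintro rfl; simp at hmn))]
  exact (hf.fderiv_right hmn).clm_apply contDiff_const

lemma ContDiff.continuous_pt (hf : ContDiff ℝ n (uncurry f)) (hn : 1 ≤ n) (x : ℝ) :
    Continuous (pt f x) :=
  (hf.uncurry_pt (m := 0) (by simpa using hn)).continuous.comp
    (continuous_const.prodMk continuous_id)

lemma ContDiff.continuous_px (hf : ContDiff ℝ n (uncurry f)) (hn : 1 ≤ n) (x : ℝ) :
    Continuous (px f x) :=
  (hf.uncurry_px (m := 0) (by simpa using hn)).continuous.comp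
    (continuous_const.prodMk continuous_id)

lemma px_pt_eq_pt_px (hf : ContDiff ℝ 2 (uncurry f)) : px (pt f) x t = pt (px f) x t := by
  have hf1 : Differentiable ℝ (uncurry f) := hf.differentiable two_ne_zero
  have hf2 : Differentiable ℝ (fderiv ℝ (uncurry f)) :=
    (hf.fderiv_right le_rfl).differentiable one_ne_zero
  rw [px_eq_fderiv ((hf.uncurry_pt le_rfl).differentiable one_ne_zero _),
    pt_eq_fderiv ((hf.uncurry_px le_rfl).differentiable one_ne_zero _),
    uncurry_pt_eq_fderiv hf1, uncurry_px_eq_fderiv hf1,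
    fderiv_clm_apply (hf2 _) (differentiableAt_const _),
    fderiv_clm_apply (hf2 _) (differentiableAt_const _)]
  simpa using (hf.contDiffAt.isSymmSndFDerivAt (by simp)) (1, 0) (0, 1)

lemma pt_energy_density_add_px_flux (hf : ContDiff ℝ 2 (uncurry f)) :
    pt (fun x τ => pt f x τ ^ 2 + px f x τ ^ 2) x t
      + px (fun x τ => -(2 * (pt f x τ * px f x τ))) x t
      = 2 * pt f x t * (ptt f x t - pxx f x t) := by
  have hu := (hf.uncurry_pt (m := 1) le_rfl).differentiable one_ne_zero (x, t)
  have hv := (hf.uncurry_px (m := 1) le_rfl).differentiable one_ne_zero (x, t)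
  have hdensity : HasDerivAt (fun τ => pt f x τ ^ 2 + px f x τ ^ 2)
      (2 * pt f x t * ptt f x t + 2 * px f x t * pt (px f) x t) t := by
    refine (((hasDerivAt_pt hu).fun_pow 2).fun_add ((hasDerivAt_pt hv).fun_pow 2)).congr_deriv ?_
    rw [show ptt f x t = pt (pt f) x t from rfl]
    ring
  have hflux : HasDerivAt (fun ξ => -(2 * (pt f ξ t * px f ξ t)))
      (-(2 * (px (pt f) x t * px f x t + pt f x t * pxx f x t))) x :=
    (((hasDerivAt_px hu).mul (hasDerivAt_px hv)).const_mul 2).neg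
  rw [show pt (fun x τ => pt f x τ ^ 2 + px f x τ ^ 2) x t = _ from hdensity.deriv,
    show px (fun x τ => -(2 * (pt f x τ * px f x τ))) x t = _ from hflux.deriv,
    px_pt_eq_pt_px hf]
  ring

lemma ContDiff.continuous_boundaryFlux (hf : ContDiff ℝ 2 (uncurry f)) (L : ℝ) :
    Continuous (boundaryFlux f L) := by
  have := hf.continuous_pt one_le_two
  have := hf.continuous_px one_le_two
  unfold boundaryFlux
  fun_prop

end PartialDerivatives

theorem wave_energy_sub_eq {f : ℝ → ℝ → ℝ} {L t : ℝ} (hf : ContDiff ℝ 2 (uncurry f))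
    (hL : 0 ≤ L) (ht : 0 ≤ t) (hw : ∀ x ∈ Icc 0 L, ∀ τ, 0 ≤ τ → ptt f x τ = pxx f x τ) :
    (∫ x in 0..L, (pt f x t ^ 2 + px f x t ^ 2)) - ∫ x in 0..L, (pt f x 0 ^ 2 + px f x 0 ^ 2) =
      2 * ∫ τ in 0..t, boundaryFlux f L τ := by
  set e : ℝ → ℝ → ℝ := fun x τ => pt f x τ ^ 2 + px f x τ ^ 2
  set q : ℝ → ℝ → ℝ := fun x τ => -(2 * (pt f x τ * px f x τ))
  have hu := hf.uncurry_pt (m := 1) le_rfl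
  have hv := hf.uncurry_px (m := 1) le_rfl
  have he : ContDiff ℝ 1 (uncurry e) := (hu.pow 2).add (hv.pow 2)
  have hq : ContDiff ℝ 1 (uncurry q) := (contDiff_const.mul (hu.mul hv)).neg
  have hdiv : ∀ p ∈ uIcc 0 L ×ˢ uIcc 0 t,
      fderiv ℝ (uncurry q) p (1, 0) + fderiv ℝ (uncurry e) p (0, 1) = 0 := by
    rintro ⟨x, τ⟩ ⟨hx, hτ⟩
    rw [uIcc_of_le hL] at hx
    rw [uIcc_of_le ht] at hτ
    rw [← px_eq_fderiv (hq.differentiable one_ne_zero _),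
      ← pt_eq_fderiv (he.differentiable one_ne_zero _), add_comm,
      pt_energy_density_add_px_flux hf, hw x hx τ hτ.1, sub_self, mul_zero]
  have hdivergence := integral2_divergence_prod_of_hasFDerivAt (uncurry q) (uncurry e)
    (fderiv ℝ (uncurry q)) (fderiv ℝ (uncurry e)) 0 0 L t
    hq.continuous.continuousOn he.continuous.continuousOn
    (fun p _ => (hq.differentiable one_ne_zero p).hasFDerivAt)
    (fun p _ => (he.differentiable one_ne_zero p).hasFDerivAt)
    (integrableOn_zero.congr_fun (fun p hp => (hdiv p hp).symm)
      (measurableSet_uIcc.prod measurableSet_uIcc))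
  rw [integral_congr fun x hx => integral_congr fun τ hτ => hdiv (x, τ) ⟨hx, hτ⟩] at hdivergence
  have hint : ∀ x, IntervalIntegrable (fun τ => pt f x τ * px f x τ) volume 0 t := fun x =>
    ((hu.continuous.mul hv.continuous).comp
      (continuous_const.prodMk continuous_id)).intervalIntegrable _ _
  simp only [uncurry_apply_pair, intervalIntegral.integral_zero, intervalIntegral.integral_neg,
    intervalIntegral.integral_const_mul, q, e] at hdivergence
  simp only [boundaryFlux]
  rw [integral_sub (hint L) (hint 0)]
  linarith

lemma ContDiff.continuous_massPower {s : ℝ → ℝ} (hs : ContDiff ℝ 2 s) :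
    Continuous (massPower s) := by
  have hs' : ContDiff ℝ 1 (deriv s) := hs.deriv'
  exact ((hs'.continuous_deriv le_rfl).add hs.continuous).mul hs'.continuous

lemma deriv_sq_add_sq_sub_eq {s : ℝ → ℝ} (hs : ContDiff ℝ 2 s) (t : ℝ) :
    (deriv s t ^ 2 + s t ^ 2) - (deriv s 0 ^ 2 + s 0 ^ 2) = 2 * ∫ τ in 0..t, massPower s τ := by
  have hs' : ContDiff ℝ 1 (deriv s) := hs.deriv'
  have hderiv : ∀ τ, HasDerivAt (fun σ => deriv s σ ^ 2 + s σ ^ 2)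
      (2 * massPower s τ) τ := fun τ =>
    ((((hs'.differentiable one_ne_zero) τ).hasDerivAt.fun_pow 2).fun_add
      (((hs.differentiable two_ne_zero) τ).hasDerivAt.fun_pow 2)).congr_deriv
        (by rw [massPower]; ring)
  rw [← intervalIntegral.integral_const_mul, integral_eq_sub_of_hasDerivAt (fun τ _ => hderiv τ)]
  exact (continuous_const.mul hs.continuous_massPower).intervalIntegrable _ _

lemma deriv_eq_zero_of_forall_le_eq_zero {g : ℝ → ℝ} {a τ : ℝ} (hg : DifferentiableAt ℝ g τ)
    (h : ∀ σ, a ≤ σ → g σ = 0) (hτ : a ≤ τ) : deriv g τ = 0 := by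
  have hu : UniqueDiffWithinAt ℝ (Ici a) τ := uniqueDiffOn_Ici a τ hτ
  rw [← hg.hasDerivAt.hasDerivWithinAt.derivWithin hu,
    ((hasDerivWithinAt_const τ (Ici a) 0).congr (fun σ hσ => h σ hσ) (h τ hτ)).derivWithin hu]

section Network

variable {ι V : Type*} [Fintype V] [DecidableEq V]

lemma sum_sub_eq_sum_sum_incidence [Fintype ι] (neg pos : ι → V) (hnp : ∀ j, neg j ≠ pos j)
    (J : V → Finset ι) (hJ : ∀ k, J k = Finset.univ.filter (fun j => neg j = k ∨ pos j = k))
    (d : V → ι → ℝ) (hd : ∀ k j, d k j = if pos j = k then 1 else if neg j = k then -1 else 0)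
    (ℓ : ι → ℝ) (a : V → ι → ℝ) (ha : ∀ k j, a k j = if pos j = k then ℓ j else 0)
    (g : ι → ℝ → ℝ) :
    ∑ j, (g j (ℓ j) - g j 0) = ∑ k, ∑ j ∈ J k, d k j * g j (a k j) := by
  have hterm : ∀ k j, d k j * g j (a k j) =
      (if pos j = k then g j (ℓ j) else 0) - (if neg j = k then g j 0 else 0) := by
    intro k j
    rw [hd, ha]
    by_cases hpos : pos j = k
    · simp [hpos, (hpos ▸ hnp j : neg j ≠ k)]
    · by_cases hneg : neg j = k <;> simp [hpos, hneg]
  have hsupport : ∀ k, ∑ j ∈ J k, d k j * g j (a k j) = ∑ j, d k j * g j (a k j) := by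
    refine fun k => Finset.sum_subset (Finset.subset_univ _) fun j _ hj => ?_
    simp only [hJ, Finset.mem_filter, Finset.mem_univ, true_and, not_or] at hj
    simp [hterm, hj.1, hj.2]
  simp_rw [hsupport, hterm]
  rw [Finset.sum_comm]
  simp [Finset.sum_sub_distrib]

lemma sum_sum_eq_root_add_sum_add_sum (J : V → Finset ι) (r : V) (IM IS : Finset V)
    (hIM : IM = Finset.univ.filter (fun k => k ≠ r ∧ 2 ≤ (J k).card))
    (hIS : IS = Finset.univ.filter (fun k => k ≠ r ∧ (J k).card = 1)) (φ : V → ι → ℝ) :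
    ∑ k, ∑ j ∈ J k, φ k j =
      ∑ j ∈ J r, φ r j + ∑ k ∈ IM, ∑ j ∈ J k, φ k j + ∑ k ∈ IS, ∑ j ∈ J k, φ k j := by
  have hr : r ∉ IM ∪ IS := by simp [hIM, hIS]
  have hdisj : Disjoint IM IS := by
    rw [hIM, hIS, Finset.disjoint_filter]
    omega
  rw [← Finset.sum_subset (Finset.subset_univ (insert r (IM ∪ IS))), Finset.sum_insert hr,
    Finset.sum_union hdisj, add_assoc]
  intro k _ hk
  simp only [Finset.mem_insert, Finset.mem_union, hIM, hIS, Finset.mem_filter, Finset.mem_univ,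
    true_and, not_or, not_and] at hk
  obtain ⟨hkr, hk2, hk1⟩ := hk
  have hcard : (J k).card = 0 := by have := hk2 hkr; have := hk1 hkr; omega
  rw [Finset.card_eq_zero.mp hcard, Finset.sum_empty]

theorem sum_edge_power_add_sum_mass_power [Fintype ι] (neg pos : ι → V)
    (hnp : ∀ j, neg j ≠ pos j) (J : V → Finset ι)
    (hJ : ∀ k, J k = Finset.univ.filter (fun j => neg j = k ∨ pos j = k))
    (r : V) (j₀ : ι) (hroot : J r = {j₀}) (IM IS : Finset V)
    (hIM : IM = Finset.univ.filter (fun k => k ≠ r ∧ 2 ≤ (J k).card))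
    (hIS : IS = Finset.univ.filter (fun k => k ≠ r ∧ (J k).card = 1))
    (jS : V → ι) (hjS : ∀ k ∈ IS, J k = {jS k})
    (d : V → ι → ℝ) (hd : ∀ k j, d k j = if pos j = k then 1 else if neg j = k then -1 else 0)
    (ℓ : ι → ℝ) (a : V → ι → ℝ) (ha : ∀ k j, a k j = if pos j = k then ℓ j else 0)
    (u w : ι → ℝ → ℝ) (m v : V → ℝ) (hu_root : u j₀ (a r j₀) = 0)
    (hu : ∀ k ∈ IM, ∀ j ∈ J k, u j (a k j) = -m k)
    (hw : ∀ k ∈ IM, ∑ j ∈ J k, d k j * w j (a k j) = v k)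
    (hfb : ∀ k ∈ IS, d k (jS k) * w (jS k) (a k (jS k)) = -u (jS k) (a k (jS k))) :
    ∑ j, (u j (ℓ j) * w j (ℓ j) - u j 0 * w j 0) + ∑ k ∈ IM, m k * v k =
      -∑ k ∈ IS, u (jS k) (a k (jS k)) ^ 2 := by
  have hinterior : ∀ k ∈ IM, ∑ j ∈ J k, d k j * (u j (a k j) * w j (a k j)) = -(m k * v k) := by
    intro k hk
    rw [← hw k hk, Finset.mul_sum, ← Finset.sum_neg_distrib]
    refine Finset.sum_congr rfl fun j hj => ?_
    rw [hu k hk j hj]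
    ring
  have hexterior : ∀ k ∈ IS, ∑ j ∈ J k, d k j * (u j (a k j) * w j (a k j)) =
      -u (jS k) (a k (jS k)) ^ 2 := by
    intro k hk
    rw [hjS k hk, Finset.sum_singleton, mul_left_comm, hfb k hk]
    ring
  rw [sum_sub_eq_sum_sum_incidence neg pos hnp J hJ d hd ℓ a ha (fun j x => u j x * w j x),
    sum_sum_eq_root_add_sum_add_sum J r IM IS hIM hIS, hroot, Finset.sum_singleton, hu_root,
    Finset.sum_congr rfl hinterior, Finset.sum_congr rfl hexterior, Finset.sum_neg_distrib,
    Finset.sum_neg_distrib]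
  ring

end Network

theorem stmt_2_general
    -- network data: `N ≥ 1` edges `Fin N`, vertices `Fin (N+1)` with root `0`
    (N : ℕ) (hN : 0 < N)
    (ℓ : Fin N → ℝ) (hℓ : ∀ j, 0 < ℓ j)
    -- each edge `j` has endpoint vertices `neg j` (at `x = 0`) and `pos j` (at `x = ℓ j`)
    (neg pos : Fin N → Fin (N + 1)) (hnp : ∀ j, neg j ≠ pos j)
    -- `Jk k` : set of edges adjacent to vertex `k`
    (Jk : Fin (N + 1) → Finset (Fin N))
    (hJk : ∀ k, Jk k = Finset.univ.filter (fun j => neg j = k ∨ pos j = k))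
    -- the root is an endpoint of the first edge only
    (hroot : Jk 0 = {⟨0, hN⟩})
    -- interior and exterior vertices (other than the root)
    (IM IS : Finset (Fin (N + 1)))
    (hIM : IM = Finset.univ.filter (fun k => k ≠ 0 ∧ 2 ≤ (Jk k).card))
    (hIS : IS = Finset.univ.filter (fun k => k ≠ 0 ∧ (Jk k).card = 1))
    -- for `k ∈ I_S`, `jS k` is the unique edge adjacent to `a_k`
    (jS : Fin (N + 1) → Fin N) (hjS : ∀ k ∈ IS, Jk k = {jS k})
    -- incidence coefficients `d k j`
    (d : Fin (N + 1) → Fin N → ℝ)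
    (hd : ∀ k j, d k j = if pos j = k then 1 else if neg j = k then -1 else 0)
    -- `a k j` : coordinate on edge `j` of the vertex `k`
    (a : Fin (N + 1) → Fin N → ℝ)
    (ha : ∀ k j, a k j = if pos j = k then ℓ j else 0)
    -- the classical solution
    (y : Fin N → ℝ → ℝ → ℝ) (s : Fin (N + 1) → ℝ → ℝ)
    (hy : ∀ j, ContDiff ℝ 2 (fun pr : ℝ × ℝ => y j pr.1 pr.2))
    (hs : ∀ k ∈ IM, ContDiff ℝ 2 (s k))
    -- wave equation on each edge
    (hwave : ∀ j, ∀ x ∈ Icc (0:ℝ) (ℓ j), ∀ t, 0 ≤ t → ptt (y j) x t = pxx (y j) x t)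
    -- balance condition at interior vertices
    (hbal : ∀ k ∈ IM, ∀ t, 0 ≤ t →
      ∑ j ∈ Jk k, d k j * px (y j) (a k j) t = deriv (s k) t)
    -- mass equation at interior vertices
    (hmass : ∀ k ∈ IM, ∀ t, 0 ≤ t → ∀ j ∈ Jk k,
      deriv (deriv (s k)) t + s k t = - pt (y j) (a k j) t)
    -- Dirichlet condition at the root
    (hdir : ∀ t, 0 ≤ t → y ⟨0, hN⟩ (a 0 ⟨0, hN⟩) t = 0)
    -- feedback conditions at exterior vertices
    (hfb : ∀ k ∈ IS, ∀ t, 0 ≤ t →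
      d k (jS k) * px (y (jS k)) (a k (jS k)) t = - pt (y (jS k)) (a k (jS k)) t)
    -- the energy
    (E : ℝ → ℝ)
    (hE : ∀ t, E t =
      (1/2) * ∑ j, (∫ x in (0:ℝ)..(ℓ j), ((pt (y j) x t)^2 + (px (y j) x t)^2))
      + (1/2) * ∑ k ∈ IM, ((deriv (s k) t)^2 + (s k t)^2)) :
    ∀ t, 0 ≤ t →
      (E 0 - E t = ∑ k ∈ IS, ∫ τ in (0:ℝ)..t, (pt (y (jS k)) (a k (jS k)) τ)^2)
      ∧ E t ≤ E 0 := by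
  intro t ht
  have hpower : ∀ τ ∈ uIcc 0 t, ∑ j, boundaryFlux (y j) (ℓ j) τ + ∑ k ∈ IM, massPower (s k) τ =
      -∑ k ∈ IS, pt (y (jS k)) (a k (jS k)) τ ^ 2 := by
    intro τ hτ
    rw [uIcc_of_le ht] at hτ
    refine sum_edge_power_add_sum_mass_power neg pos hnp Jk hJk 0 ⟨0, hN⟩ hroot IM IS hIM hIS jS
      hjS d hd ℓ a ha (fun j x => pt (y j) x τ) (fun j x => px (y j) x τ) _ _ ?_
      (fun k hk j hj => by linarith [hmass k hk τ hτ.1 j hj]) (fun k hk => hbal k hk τ hτ.1)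
      (fun k hk => hfb k hk τ hτ.1)
    exact deriv_eq_zero_of_forall_le_eq_zero
      (hasDerivAt_pt ((hy _).differentiable two_ne_zero _)).differentiableAt hdir hτ.1
  have hedges := Finset.sum_congr rfl fun j (_ : j ∈ Finset.univ) =>
    wave_energy_sub_eq (hy j) (hℓ j).le ht (hwave j)
  have hmasses := Finset.sum_congr rfl fun k (hk : k ∈ IM) => deriv_sq_add_sq_sub_eq (hs k hk) t
  rw [Finset.sum_sub_distrib, ← Finset.mul_sum] at hedges hmasses
  have hflux := fun j => (hy j).continuous_boundaryFlux (ℓ j)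
  have hmass_cont := fun k hk => (hs k hk).continuous_massPower
  have hdissipation : E 0 - E t = -∫ τ in 0..t,
      (∑ j, boundaryFlux (y j) (ℓ j) τ + ∑ k ∈ IM, massPower (s k) τ) := by
    rw [intervalIntegral.integral_add
        ((continuous_finsetSum _ fun j _ => hflux j).intervalIntegrable _ _)
        ((continuous_finsetSum _ hmass_cont).intervalIntegrable _ _),
      intervalIntegral.integral_finsetSum fun j _ => (hflux j).intervalIntegrable _ _,
      intervalIntegral.integral_finsetSum fun k hk => (hmass_cont k hk).intervalIntegrable _ _,
      hE, hE]
    linear_combination (-1 / 2 : ℝ) * hedges - (1 / 2 : ℝ) * hmasses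
  rw [intervalIntegral.integral_congr hpower, intervalIntegral.integral_neg, neg_neg,
    intervalIntegral.integral_finsetSum (f := fun k τ => pt (y (jS k)) (a k (jS k)) τ ^ 2)
      fun k _ => (((hy _).continuous_pt one_le_two _).pow 2).intervalIntegrable _ _]
    at hdissipation
  refine ⟨hdissipation, ?_⟩
  rw [← sub_nonneg, hdissipation]
  exact Finset.sum_nonneg fun k _ => intervalIntegral.integral_nonneg ht fun τ _ => sq_nonneg _

/-- energy dissipation identity for the fluid-structure network system on a tree:
`E(0) − E(t) = Σ_{k ∈ I_S} ∫₀ᵗ |∂ₜ y_{j_k}(a_k, τ)|² dτ`, and in particular `E(t) ≤ E(0)`. -/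
theorem stmt_2
    -- network data: `N ≥ 1` edges `Fin N`, vertices `Fin (N+1)` with root `0`
    (N : ℕ) (hN : 0 < N)
    (ℓ : Fin N → ℝ) (hℓ : ∀ j, 0 < ℓ j)
    -- each edge `j` has endpoint vertices `neg j` (at `x = 0`) and `pos j` (at `x = ℓ j`)
    (neg pos : Fin N → Fin (N + 1)) (hnp : ∀ j, neg j ≠ pos j)
    -- `Jk k` : set of edges adjacent to vertex `k`
    (Jk : Fin (N + 1) → Finset (Fin N))
    (hJk : ∀ k, Jk k = Finset.univ.filter (fun j => neg j = k ∨ pos j = k))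
    -- the root is an endpoint of the first edge only
    (hroot : Jk 0 = {⟨0, hN⟩})
    -- interior and exterior vertices (other than the root)
    (IM IS : Finset (Fin (N + 1)))
    (hIM : IM = Finset.univ.filter (fun k => k ≠ 0 ∧ 2 ≤ (Jk k).card))
    (hIS : IS = Finset.univ.filter (fun k => k ≠ 0 ∧ (Jk k).card = 1))
    -- for `k ∈ I_S`, `jS k` is the unique edge adjacent to `a_k`
    (jS : Fin (N + 1) → Fin N) (hjS : ∀ k ∈ IS, Jk k = {jS k})
    -- incidence coefficients `d k j`
    (d : Fin (N + 1) → Fin N → ℝ)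
    (hd : ∀ k j, d k j = if pos j = k then 1 else if neg j = k then -1 else 0)
    -- `a k j` : coordinate on edge `j` of the vertex `k`
    (a : Fin (N + 1) → Fin N → ℝ)
    (ha : ∀ k j, a k j = if pos j = k then ℓ j else 0)
    -- the classical solution
    (y : Fin N → ℝ → ℝ → ℝ) (s : Fin (N + 1) → ℝ → ℝ)
    (hy : ∀ j, ContDiff ℝ 2 (fun pr : ℝ × ℝ => y j pr.1 pr.2))
    (hs : ∀ k ∈ IM, ContDiff ℝ 2 (s k))
    -- wave equation on each edge
    (hwave : ∀ j, ∀ x ∈ Icc (0:ℝ) (ℓ j), ∀ t, 0 ≤ t → ptt (y j) x t = pxx (y j) x t)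
    -- continuity at interior vertices
    (hcont : ∀ k ∈ IM, ∀ t, 0 ≤ t → ∀ j ∈ Jk k, ∀ l ∈ Jk k,
      y j (a k j) t = y l (a k l) t)
    -- balance condition at interior vertices
    (hbal : ∀ k ∈ IM, ∀ t, 0 ≤ t →
      ∑ j ∈ Jk k, d k j * px (y j) (a k j) t = deriv (s k) t)
    -- mass equation at interior vertices
    (hmass : ∀ k ∈ IM, ∀ t, 0 ≤ t → ∀ j ∈ Jk k,
      deriv (deriv (s k)) t + s k t = - pt (y j) (a k j) t)
    -- Dirichlet condition at the root
    (hdir : ∀ t, 0 ≤ t → y ⟨0, hN⟩ (a 0 ⟨0, hN⟩) t = 0)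
    -- feedback conditions at exterior vertices
    (hfb : ∀ k ∈ IS, ∀ t, 0 ≤ t →
      d k (jS k) * px (y (jS k)) (a k (jS k)) t = - pt (y (jS k)) (a k (jS k)) t)
    -- the energy
    (E : ℝ → ℝ)
    (hE : ∀ t, E t =
      (1/2) * ∑ j, (∫ x in (0:ℝ)..(ℓ j), ((pt (y j) x t)^2 + (px (y j) x t)^2))
      + (1/2) * ∑ k ∈ IM, ((deriv (s k) t)^2 + (s k t)^2)) :
    ∀ t, 0 ≤ t →
      (E 0 - E t = ∑ k ∈ IS, ∫ τ in (0:ℝ)..t, (pt (y (jS k)) (a k (jS k)) τ)^2)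
      ∧ E t ≤ E 0 :=
  stmt_2_general N hN ℓ hℓ neg pos hnp Jk hJk hroot IM IS hIM hIS jS hjS d hd a ha y s hy hs hwave
    hbal hmass hdir hfb E hE
end

section
/- Let ℓ > 0 be an irrational real number, and let (p_n), (q_n) be sequences of positive integers with q_n → ∞ and |q_n ℓ − p_n| < 1/q_n for all n. Set β_n := 2π q_n + 2π q_n^{−1/4}. Then, as n → ∞: sin(β_n ℓ) − 2π ℓ q_n^{−1/4} = o(q_n^{−1/4}) and cos(β_n ℓ) − 1 = o(q_n^{−1/4}). -/
open Real Filter Topology Asymptotics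

/-!
Write `r_n = q_n^{-1/4}` and `e_n = q_n ℓ - p_n`. Then `β_n ℓ = 2π p_n + θ_n` with
`θ_n = 2π e_n + 2πℓ r_n`, so by periodicity only `sin θ_n` and `cos θ_n` matter. Since
`|e_n| < q_n⁻¹ = o(r_n)`, we have `θ_n = O(r_n) → 0`, and the first-order Taylor expansions
`sin θ = θ + o(θ)`, `cos θ = 1 + o(θ)` give both claims.
-/

theorem isLittleO_rpow_rpow_atTop {a b : ℝ} (hab : a < b) :
    (fun x : ℝ => x ^ a) =o[atTop] fun x => x ^ b := by
  rw [isLittleO_iff_tendsto' ((eventually_gt_atTop 0).mono fun x hx h =>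
    absurd h (rpow_pos_of_pos hx b).ne')]
  refine (tendsto_rpow_neg_atTop (sub_pos.2 hab)).congr' ?_
  filter_upwards [eventually_gt_atTop 0] with x hx
  rw [← rpow_sub hx, neg_sub]

theorem isLittleO_rpow_neg_of_abs_le_inv {ι : Type*} {l : Filter ι} {x e : ι → ℝ}
    (hx : Tendsto x l atTop) (he : ∀ n, |e n| ≤ 1 / x n) {a : ℝ} (ha : a < 1) :
    e =o[l] fun n => x n ^ (-a) := by
  have hbound : e =O[l] fun n => x n ^ (-1 : ℝ) := by
    refine IsBigO.of_bound 1 ?_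
    filter_upwards [hx.eventually_gt_atTop 0] with n hn
    rw [one_mul, norm_eq_abs, norm_eq_abs, abs_of_pos (rpow_pos_of_pos hn _), rpow_neg_one,
      ← one_div]
    exact he n
  exact hbound.trans_isLittleO ((isLittleO_rpow_rpow_atTop (neg_lt_neg ha)).comp_tendsto hx)

theorem Real.isLittleO_sin_sub_self : (fun x => sin x - x) =o[𝓝 0] fun x => x := by
  simpa using (hasDerivAt_iff_isLittleO_nhds_zero.1 (hasDerivAt_sin 0))

theorem Real.isLittleO_cos_sub_one : (fun x => cos x - 1) =o[𝓝 0] fun x => x := by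
  simpa using (hasDerivAt_iff_isLittleO_nhds_zero.1 (hasDerivAt_cos 0))

section

variable {α : Type*} {l : Filter α} {θ r : α → ℝ}

theorem Asymptotics.IsBigO.isLittleO_sin_sub_self (hθ : θ =O[l] r) (hr : Tendsto r l (𝓝 0)) :
    (fun n => sin (θ n) - θ n) =o[l] r :=
  (Real.isLittleO_sin_sub_self.comp_tendsto (hθ.trans_tendsto hr)).trans_isBigO hθ

theorem Asymptotics.IsBigO.isLittleO_cos_sub_one (hθ : θ =O[l] r) (hr : Tendsto r l (𝓝 0)) :
    (fun n => cos (θ n) - 1) =o[l] r :=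
  (Real.isLittleO_cos_sub_one.comp_tendsto (hθ.trans_tendsto hr)).trans_isBigO hθ

end

theorem stmt_6_general (ℓ : ℝ)
    (p q : ℕ → ℕ)
    (hqtop : Tendsto (fun n => (q n : ℝ)) atTop atTop)
    (happrox : ∀ n, |(q n : ℝ) * ℓ - (p n : ℝ)| < 1 / (q n : ℝ))
    (β : ℕ → ℝ)
    (hβ : ∀ n, β n = 2*π*(q n : ℝ) + 2*π*((q n : ℝ) ^ (-(1/4 : ℝ)))) :
    Tendsto (fun n => (Real.sin (β n * ℓ) - 2*π*ℓ*((q n : ℝ) ^ (-(1/4 : ℝ))))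
        / ((q n : ℝ) ^ (-(1/4 : ℝ)))) atTop (nhds 0)
    ∧ Tendsto (fun n => (Real.cos (β n * ℓ) - 1) / ((q n : ℝ) ^ (-(1/4 : ℝ))))
        atTop (nhds 0) := by
  set r : ℕ → ℝ := fun n => (q n : ℝ) ^ (-(1/4 : ℝ))
  set e : ℕ → ℝ := fun n => (q n : ℝ) * ℓ - p n
  set θ : ℕ → ℝ := fun n => 2*π*e n + 2*π*ℓ*r n
  have hβθ (n : ℕ) : β n * ℓ = θ n + p n * (2*π) := by simp only [hβ, θ, e, r]; ring
  have he : e =o[atTop] r :=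
    isLittleO_rpow_neg_of_abs_le_inv hqtop (fun n => (happrox n).le) (by norm_num)
  have hr : Tendsto r atTop (𝓝 0) := (tendsto_rpow_neg_atTop (by norm_num)).comp hqtop
  have hθ : θ =O[atTop] r :=
    (he.isBigO.const_mul_left (2*π)).add ((isBigO_refl r atTop).const_mul_left (2*π*ℓ))
  constructor
  · have hsin := (hθ.isLittleO_sin_sub_self hr).add (he.const_mul_left (2*π))
    refine hsin.tendsto_div_nhds_zero.congr fun n => ?_
    rw [hβθ, sin_add_nat_mul_two_pi]
    ring
  · refine (hθ.isLittleO_cos_sub_one hr).tendsto_div_nhds_zero.congr fun n => ?_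
    rw [hβθ, cos_add_nat_mul_two_pi]

/-- for `ℓ > 0` irrational with Dirichlet approximations `|q_n ℓ − p_n| < 1/q_n`
and `β_n = 2π q_n + 2π q_n^{−1/4}`, one has `sin(β_n ℓ) = 2πℓ q_n^{−1/4} + o(q_n^{−1/4})` and
`cos(β_n ℓ) = 1 + o(q_n^{−1/4})`. -/
theorem stmt_6 (ℓ : ℝ) (hℓ : 0 < ℓ) (hirr : Irrational ℓ)
    (p q : ℕ → ℕ) (hp : ∀ n, 0 < p n) (hq : ∀ n, 0 < q n)
    (hqtop : Tendsto (fun n => (q n : ℝ)) atTop atTop)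
    (happrox : ∀ n, |(q n : ℝ) * ℓ - (p n : ℝ)| < 1 / (q n : ℝ))
    (β : ℕ → ℝ)
    (hβ : ∀ n, β n = 2*π*(q n : ℝ) + 2*π*((q n : ℝ) ^ (-(1/4 : ℝ)))) :
    Tendsto (fun n => (Real.sin (β n * ℓ) - 2*π*ℓ*((q n : ℝ) ^ (-(1/4 : ℝ))))
        / ((q n : ℝ) ^ (-(1/4 : ℝ)))) atTop (nhds 0)
    ∧ Tendsto (fun n => (Real.cos (β n * ℓ) - 1) / ((q n : ℝ) ^ (-(1/4 : ℝ))))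
        atTop (nhds 0) :=
  stmt_6_general ℓ p q hqtop happrox β hβ
end

section
/- Let ℓ > 0 be an irrational real number, and let (p_n), (q_n) be sequences of positive integers with q_n → ∞ and |q_n ℓ − p_n| < 1/q_n for all n. Set β_n := 2π q_n + 2π q_n^{−1/4}, and define complex sequences A_n := (1 + cos(β_n ℓ)) sin β_n + e^{−i β_n} sin(β_n ℓ); B_n := 2 − cos(β_n ℓ) cos β_n + i ( e^{−i β_n} sin(β_n ℓ) − sin β_n ); C_n := (1/(2 β_n²)) sin β_n − ( (1/2) sin β_n + (1/2)(−1 + i) cos β_n ) sin(β_n ℓ) + (1/(2 β_n)) cos β_n cos(β_n ℓ); F_n := e^{−i β_n} ( cos β_n − 1 ) − sin β_n sin(β_n ℓ); G_n := e^{−i β_n} ( cos β_n / sin β_n − 2 i ) − cos β_n sin(β_n ℓ) − i e^{−i β_n} cos(β_n ℓ); H_n := −(1/(2 β_n)) e^{−i β_n} − (1/(2 β_n)) cos β_n sin(β_n ℓ) − (1/2) sin β_n cos(β_n ℓ) − (1/2)(−1 + i) cos β_n cos(β_n ℓ). Then, as n → ∞: q_n^{1/4} A_n → 2π(2 + ℓ);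 B_n → 1; q_n^{1/4} C_n → (1 − i) π ℓ; q_n^{1/2} F_n → −2π²(2ℓ + 1); G_n − q_n^{1/4}/(2π) → −4 i; and H_n → (1 − i)/2. -/
/-!
Write `β_n = 2π q_n + ε_n` and `β_n ℓ = 2π p_n + η_n`, so that `ε_n = 2π q_n^{-1/4}` and
`η_n = 2π (q_n ℓ - p_n) + ε_n ℓ`. Every coefficient depends on `β_n` only through `2π`-periodic
functions (and through `1/β_n → 0`), so only the small angles `ε_n, η_n` matter. With
`t_n = q_n^{1/4}` one has `t_n ε_n = 2π`, and the Diophantine bound `|q_n ℓ - p_n| < 1/q_n` gives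
`t_n η_n → 2πℓ`. The limits then follow from the small-angle behaviour `t sin x → lim t x`,
`t² (cos x - 1) → -(lim t x)² / 2`, `(e^{-ix} - 1)/x → -i` and `cot x - 1/x → 0`; in `G` the
subtracted `t_n / (2π) = 1/ε_n` is exactly the pole of `cot ε_n`.
-/

open Real Filter Complex Topology

theorem Real.mul_sinc (x : ℝ) : x * sinc x = Real.sin x := by
  simpa [sinc_eq_dslope] using sub_smul_dslope Real.sin 0 x

theorem Real.abs_mul_cos_sub_sin_le (x : ℝ) : |x * Real.cos x - Real.sin x| ≤ |x| ^ 3 := by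
  have hcos : |Real.cos x - 1| ≤ x ^ 2 / 2 := abs_le.2
    ⟨by linarith [one_sub_sq_div_two_le_cos (x := x)], by linarith [cos_le_one x, sq_nonneg x]⟩
  have hx3 : |x| ^ 3 = |x| * x ^ 2 := by rw [pow_succ', sq_abs]
  calc |x * Real.cos x - Real.sin x| = |x * (Real.cos x - 1) + (x - Real.sin x)| := by
        congr 1; ring
    _ ≤ |x| * (x ^ 2 / 2) + |x| ^ 3 / 6 := by grw [abs_add_le, abs_mul, hcos, abs_sub_sin_le]
    _ ≤ |x| ^ 3 := by nlinarith [mul_nonneg (abs_nonneg x) (sq_nonneg x)]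

theorem Complex.exp_neg_I_mul_sub_nat_mul_two_pi (x : ℝ) (n : ℕ) :
    exp (-I * ((x - n * (2 * π) : ℝ) : ℂ)) = exp (-I * x) := by
  rw [exp_eq_exp_iff_exists_int]
  exact ⟨n, by push_cast; ring⟩

theorem tendsto_cot_sub_inv_nhdsNE :
    Tendsto (fun x => Real.cos x / Real.sin x - 1 / x) (𝓝[≠] 0) (𝓝 0) := by
  have hsinc : Tendsto (fun x => Real.sin x / x) (𝓝[≠] 0) (𝓝 1) := by
    have := (continuous_sinc.tendsto 0).mono_left (nhdsWithin_le_nhds (s := {0}ᶜ))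
    rw [sinc_zero] at this
    exact this.congr' (eventually_nhdsWithin_of_forall fun x hx => sinc_of_ne_zero hx)
  have hnum : Tendsto (fun x => (x * Real.cos x - Real.sin x) / x ^ 2) (𝓝[≠] 0) (𝓝 0) := by
    refine squeeze_zero_norm' ?_
      ((continuous_abs.tendsto' 0 0 abs_zero).mono_left nhdsWithin_le_nhds)
    filter_upwards [self_mem_nhdsWithin] with x (hx : x ≠ 0)
    have hx2 : 0 < x ^ 2 := by positivity
    rw [Real.norm_eq_abs, abs_div, abs_of_pos hx2, div_le_iff₀ hx2, ← sq_abs, ← pow_succ']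
    exact Real.abs_mul_cos_sub_sin_le x
  have h := hnum.div hsinc one_ne_zero
  rw [zero_div] at h
  refine h.congr' ?_
  filter_upwards [self_mem_nhdsWithin, hsinc.eventually_ne one_ne_zero] with x (hx : x ≠ 0) hs
  have hs' : Real.sin x ≠ 0 := fun h0 => hs (by rw [h0, zero_div])
  simp only [Pi.div_apply]
  field_simp

theorem tendsto_exp_neg_I_mul_sub_one_div_nhdsNE :
    Tendsto (fun x : ℝ => (exp (-I * x) - 1) / x) (𝓝[≠] 0) (𝓝 (-I)) := by
  have hd : HasDerivAt (fun x : ℝ => exp (-I * x)) (-I) 0 := by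
    simpa using ((hasDerivAt_id (0:ℝ)).ofReal_comp.const_mul (-I)).cexp
  rw [hasDerivAt_iff_tendsto_slope_zero] at hd
  refine hd.congr fun x => ?_
  simp [div_eq_inv_mul]

section

variable {ι : Type*} {l : Filter ι}

theorem tendsto_mul_sin_of_tendsto_mul {t x : ι → ℝ} {c : ℝ} (hx : Tendsto x l (𝓝 0))
    (htx : Tendsto (fun i => t i * x i) l (𝓝 c)) :
    Tendsto (fun i => t i * Real.sin (x i)) l (𝓝 c) := by
  have h := htx.mul ((continuous_sinc.tendsto 0).comp hx)
  rw [sinc_zero, mul_one] at h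
  simpa only [Function.comp_def, mul_assoc, Real.mul_sinc] using h

theorem tendsto_sq_mul_cos_sub_one_of_tendsto_mul {t x : ι → ℝ} {c : ℝ} (hx : Tendsto x l (𝓝 0))
    (htx : Tendsto (fun i => t i * x i) l (𝓝 c)) :
    Tendsto (fun i => t i ^ 2 * (Real.cos (x i) - 1)) l (𝓝 (-(c ^ 2 / 2))) := by
  have h := tendsto_mul_sin_of_tendsto_mul (by simpa using hx.div_const 2)
    (by simpa only [mul_div_assoc] using htx.div_const 2)
  rw [show -(c ^ 2 / 2) = -2 * (c / 2) ^ 2 by ring]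
  refine ((h.pow 2).const_mul (-2)).congr fun i => ?_
  have hcos : Real.cos (x i) = 1 - 2 * Real.sin (x i / 2) ^ 2 := by
    rw [← Real.cos_two_mul_eq_one_sub, mul_div_cancel₀ _ two_ne_zero]
  rw [hcos]
  ring

theorem tendsto_rpow_mul_sub_of_abs_sub_lt_inv {q p : ι → ℝ} {ℓ a : ℝ} (ha : a < 1)
    (hq : Tendsto q l atTop) (happrox : ∀ i, |q i * ℓ - p i| < 1 / q i) :
    Tendsto (fun i => q i ^ a * (q i * ℓ - p i)) l (𝓝 0) := by
  have hlim : Tendsto (fun i => q i ^ (a - 1)) l (𝓝 0) := by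
    have h := (tendsto_rpow_neg_atTop (sub_pos.2 ha)).comp hq
    rwa [neg_sub] at h
  refine squeeze_zero_norm' ?_ hlim
  filter_upwards [hq.eventually_gt_atTop 0] with i hi
  rw [norm_mul, Real.norm_of_nonneg (by positivity), Real.norm_eq_abs, rpow_sub_one hi.ne',
    div_eq_mul_one_div]
  exact mul_le_mul_of_nonneg_left (happrox i).le (by positivity)

theorem tendsto_rpow_div_of_mul_le {q β : ι → ℝ} {a c : ℝ}
    (ha : a < 1) (hc : 0 < c) (hq : Tendsto q l atTop) (hβ : ∀ i, c * q i ≤ β i) :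
    Tendsto (fun i => q i ^ a / β i) l (𝓝 0) := by
  have hlim : Tendsto (fun i => q i ^ (a - 1) / c) l (𝓝 0) := by
    have h := ((tendsto_rpow_neg_atTop (sub_pos.2 ha)).comp hq).div_const c
    rwa [neg_sub, zero_div] at h
  refine squeeze_zero' ?_ ?_ hlim
  · filter_upwards [hq.eventually_gt_atTop 0] with i hi
    exact div_nonneg (by positivity) ((by positivity : 0 ≤ c * q i).trans (hβ i))
  · filter_upwards [hq.eventually_gt_atTop 0] with i hi
    rw [rpow_sub_one hi.ne', div_div, mul_comm (q i)]
    exact div_le_div_of_nonneg_left (by positivity) (by positivity) (hβ i)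

end

structure SmallAngleScaling {ι : Type*} (l : Filter ι) (ℓ : ℝ) (t ε η : ι → ℝ) : Prop where
  mul_ε : ∀ i, t i * ε i = 2 * π
  tendsto_ε : Tendsto ε l (𝓝 0)
  tendsto_mul_η : Tendsto (fun i => t i * η i) l (𝓝 (2 * π * ℓ))

namespace SmallAngleScaling

variable {ι : Type*} {l : Filter ι} {ℓ : ℝ}

theorem of_abs_sub_lt_inv {p q β : ι → ℝ}
    (hq : Tendsto q l atTop) (happrox : ∀ i, |q i * ℓ - p i| < 1 / q i)
    (hβ : ∀ i, β i = 2 * π * q i + 2 * π * q i ^ (-(1/4 : ℝ))) :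
    SmallAngleScaling l ℓ (fun i => q i ^ (1/4 : ℝ)) (fun i => β i - q i * (2 * π))
      (fun i => β i * ℓ - p i * (2 * π)) := by
  have hqpos (i : ι) : 0 < q i := one_div_pos.1 ((abs_nonneg _).trans_lt (happrox i))
  have hε (i : ι) : β i - q i * (2 * π) = 2 * π * q i ^ (-(1/4 : ℝ)) := by rw [hβ]; ring
  have htε (i : ι) : q i ^ (1/4 : ℝ) * (β i - q i * (2 * π)) = 2 * π := by
    rw [hε, mul_left_comm, ← rpow_add (hqpos i)]
    norm_num
  refine ⟨htε, ?_, ?_⟩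
  · have h := ((tendsto_rpow_neg_atTop (by norm_num : (0 : ℝ) < 1/4)).comp hq).const_mul (2 * π)
    rw [mul_zero] at h
    exact h.congr fun i => (hε i).symm
  -- `t η = 2π t (q ℓ - p) + (t ε) ℓ` with `t (q ℓ - p) → 0`
  have h := ((tendsto_rpow_mul_sub_of_abs_sub_lt_inv (by norm_num : (1/4 : ℝ) < 1) hq
    happrox).const_mul (2 * π)).add_const (2 * π * ℓ)
  rw [mul_zero, zero_add] at h
  refine h.congr fun i => ?_
  linear_combination -ℓ * htε i

variable {t ε η β : ι → ℝ} (h : SmallAngleScaling l ℓ t ε η)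
include h

theorem tendsto_η : Tendsto η l (𝓝 0) := by
  have := (h.tendsto_mul_η.mul h.tendsto_ε).div_const (2 * π)
  rw [mul_zero, zero_div] at this
  refine this.congr fun i => ?_
  rw [mul_right_comm, h.mul_ε, mul_div_cancel_left₀ _ two_pi_pos.ne']

theorem ε_ne_zero (i : ι) : ε i ≠ 0 := fun hi =>
  two_pi_pos.ne' (by rw [← h.mul_ε i, hi, mul_zero])

theorem tendsto_ε_nhdsNE : Tendsto ε l (𝓝[≠] 0) :=
  tendsto_nhdsWithin_iff.2 ⟨h.tendsto_ε, Eventually.of_forall h.ε_ne_zero⟩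

theorem tendsto_mul_sin_ε : Tendsto (fun i => t i * Real.sin (ε i)) l (𝓝 (2 * π)) :=
  tendsto_mul_sin_of_tendsto_mul h.tendsto_ε (tendsto_const_nhds.congr fun i => (h.mul_ε i).symm)

theorem tendsto_mul_sin_η : Tendsto (fun i => t i * Real.sin (η i)) l (𝓝 (2 * π * ℓ)) :=
  tendsto_mul_sin_of_tendsto_mul h.tendsto_η h.tendsto_mul_η

theorem tendsto_cos_ε : Tendsto (fun i => Real.cos (ε i)) l (𝓝 1) :=
  (Real.continuous_cos.tendsto' 0 1 Real.cos_zero).comp h.tendsto_ε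

theorem tendsto_sin_ε : Tendsto (fun i => Real.sin (ε i)) l (𝓝 0) :=
  (Real.continuous_sin.tendsto' 0 0 Real.sin_zero).comp h.tendsto_ε

theorem tendsto_cos_η : Tendsto (fun i => Real.cos (η i)) l (𝓝 1) :=
  (Real.continuous_cos.tendsto' 0 1 Real.cos_zero).comp h.tendsto_η

theorem tendsto_sin_η : Tendsto (fun i => Real.sin (η i)) l (𝓝 0) :=
  (Real.continuous_sin.tendsto' 0 0 Real.sin_zero).comp h.tendsto_η

theorem tendsto_cexp_ε : Tendsto (fun i => exp (-I * ε i)) l (𝓝 1) := by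
  have hc : Continuous fun x : ℝ => exp (-I * x) := by fun_prop
  exact (hc.tendsto' 0 1 (by simp)).comp h.tendsto_ε

theorem tendsto_mul_A :
    Tendsto (fun i => ((t i : ℝ) : ℂ) * (((1 + Real.cos (η i)) * Real.sin (ε i) : ℝ)
        + exp (-I * (ε i : ℂ)) * (Real.sin (η i) : ℝ))) l (𝓝 ((2 * π * (2 + ℓ) : ℝ) : ℂ)) := by
  have hlim := (tendsto_ofReal_iff.2 ((h.tendsto_cos_η.const_add 1).mul h.tendsto_mul_sin_ε)).add
    (h.tendsto_cexp_ε.mul (tendsto_ofReal_iff.2 h.tendsto_mul_sin_η))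
  convert hlim using 2 with i
  · push_cast; ring
  · push_cast; ring

theorem tendsto_B :
    Tendsto (fun i => 2 - ((Real.cos (η i) * Real.cos (ε i) : ℝ) : ℂ)
        + I * (exp (-I * (ε i : ℂ)) * (Real.sin (η i) : ℝ) - (Real.sin (ε i) : ℝ))) l (𝓝 1) := by
  have hcos := tendsto_ofReal_iff.2 (h.tendsto_cos_η.mul h.tendsto_cos_ε)
  have hsin := (h.tendsto_cexp_ε.mul (tendsto_ofReal_iff.2 h.tendsto_sin_η)).sub
    (tendsto_ofReal_iff.2 h.tendsto_sin_ε)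
  convert ((tendsto_const_nhds (x := (2 : ℂ))).sub hcos).add (hsin.const_mul I) using 2
  norm_num

theorem tendsto_mul_C (hβ : Tendsto β l atTop) (htβ : Tendsto (fun i => t i / β i) l (𝓝 0)) :
    Tendsto (fun i => ((t i : ℝ) : ℂ) * (((1 / (2 * (β i) ^ 2) * Real.sin (ε i) : ℝ) : ℂ)
        - (((1 / 2) * Real.sin (ε i) : ℝ) + (1 / 2) * (-1 + I) * (Real.cos (ε i) : ℝ))
          * (Real.sin (η i) : ℝ)
        + ((1 / (2 * β i) * Real.cos (ε i) * Real.cos (η i) : ℝ) : ℂ)))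
      l (𝓝 ((1 - I) * ((π * ℓ : ℝ) : ℂ))) := by
  have hsmall := ((htβ.mul hβ.inv_tendsto_atTop).div_const 2).mul h.tendsto_sin_ε
  have hmid := ((tendsto_ofReal_iff.2 (h.tendsto_sin_ε.const_mul (1 / 2))).add
    ((tendsto_ofReal_iff.2 h.tendsto_cos_ε).const_mul ((1 / 2) * (-1 + I)))).mul
    (tendsto_ofReal_iff.2 h.tendsto_mul_sin_η)
  have hlast := (htβ.div_const 2).mul (h.tendsto_cos_ε.mul h.tendsto_cos_η)
  have hlim := ((tendsto_ofReal_iff.2 hsmall).sub hmid).add (tendsto_ofReal_iff.2 hlast)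
  convert hlim using 2 with i
  · push_cast [Pi.inv_apply]; ring
  · push_cast; ring

theorem tendsto_sq_mul_F :
    Tendsto (fun i => ((t i ^ 2 : ℝ) : ℂ) * (exp (-I * (ε i : ℂ)) * ((Real.cos (ε i) : ℝ) - 1)
        - ((Real.sin (ε i) * Real.sin (η i) : ℝ) : ℂ)))
      l (𝓝 ((-2 * π ^ 2 * (2 * ℓ + 1) : ℝ) : ℂ)) := by
  have hcos := tendsto_sq_mul_cos_sub_one_of_tendsto_mul h.tendsto_ε
    (tendsto_const_nhds.congr fun i => (h.mul_ε i).symm)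
  have hlim := (h.tendsto_cexp_ε.mul (tendsto_ofReal_iff.2 hcos)).sub
    ((tendsto_ofReal_iff.2 h.tendsto_mul_sin_ε).mul (tendsto_ofReal_iff.2 h.tendsto_mul_sin_η))
  convert hlim using 2 with i
  · push_cast; ring
  · push_cast; ring

theorem tendsto_G_sub :
    Tendsto (fun i => exp (-I * (ε i : ℂ)) * (((Real.cos (ε i) / Real.sin (ε i) : ℝ) : ℂ) - 2 * I)
        - ((Real.cos (ε i) * Real.sin (η i) : ℝ) : ℂ)
        - I * exp (-I * (ε i : ℂ)) * (Real.cos (η i) : ℝ) - ((t i : ℝ) : ℂ) / (2 * π))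
      l (𝓝 (-4 * I)) := by
  have hcot := tendsto_cot_sub_inv_nhdsNE.comp h.tendsto_ε_nhdsNE
  have hslope := tendsto_exp_neg_I_mul_sub_one_div_nhdsNE.comp h.tendsto_ε_nhdsNE
  have hlim := ((((h.tendsto_cexp_ε.mul (tendsto_ofReal_iff.2 hcot)).add hslope).sub
    (h.tendsto_cexp_ε.const_mul (2 * I))).sub
    (tendsto_ofReal_iff.2 (h.tendsto_cos_ε.mul h.tendsto_sin_η))).sub
    ((h.tendsto_cexp_ε.const_mul I).mul (tendsto_ofReal_iff.2 h.tendsto_cos_η))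
  convert hlim using 2 with i
  · have ht : ((t i : ℝ) : ℂ) / (2 * π) = 1 / (ε i : ℂ) := by
      rw [div_eq_div_iff (by exact_mod_cast two_pi_pos.ne') (by exact_mod_cast h.ε_ne_zero i),
        one_mul]
      exact_mod_cast h.mul_ε i
    simp only [Function.comp_apply]
    push_cast
    rw [ht]
    ring
  · push_cast; ring

theorem tendsto_H (hβ : Tendsto β l atTop) :
    Tendsto (fun i => -((1 / (2 * β i) : ℝ) : ℂ) * exp (-I * (ε i : ℂ))
        - ((1 / (2 * β i) * Real.cos (ε i) * Real.sin (η i) : ℝ) : ℂ)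
        - (((1 / 2) * Real.sin (ε i) * Real.cos (η i) : ℝ) : ℂ)
        - (1 / 2) * (-1 + I) * ((Real.cos (ε i) * Real.cos (η i) : ℝ) : ℂ))
      l (𝓝 ((1 - I) / 2)) := by
  have hinv := (hβ.const_mul_atTop two_pos).inv_tendsto_atTop
  have hlim := ((((tendsto_ofReal_iff.2 hinv).neg.mul h.tendsto_cexp_ε).sub
    (tendsto_ofReal_iff.2 ((hinv.mul h.tendsto_cos_ε).mul h.tendsto_sin_η))).sub
    (tendsto_ofReal_iff.2 ((h.tendsto_sin_ε.const_mul (1 / 2)).mul h.tendsto_cos_η))).sub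
    ((tendsto_ofReal_iff.2 (h.tendsto_cos_ε.mul h.tendsto_cos_η)).const_mul ((1 / 2) * (-1 + I)))
  convert hlim using 2 with i
  · push_cast [Pi.inv_apply]; ring
  · push_cast; ring

end SmallAngleScaling

theorem stmt_7_general (ℓ : ℝ)
    (p q : ℕ → ℕ)
    (hqtop : Tendsto (fun n => (q n : ℝ)) atTop atTop)
    (happrox : ∀ n, |(q n : ℝ) * ℓ - (p n : ℝ)| < 1 / (q n : ℝ))
    (β : ℕ → ℝ)
    (hβ : ∀ n, β n = 2*π*(q n : ℝ) + 2*π*((q n : ℝ) ^ (-(1/4 : ℝ))))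
    (A B C F G H : ℕ → ℂ)
    (hA : ∀ n, A n = ((1 + Real.cos (β n * ℓ)) * Real.sin (β n) : ℝ)
        + Complex.exp (-Complex.I * (β n : ℂ)) * (Real.sin (β n * ℓ) : ℝ))
    (hB : ∀ n, B n = 2 - ((Real.cos (β n * ℓ) * Real.cos (β n) : ℝ) : ℂ)
        + Complex.I * (Complex.exp (-Complex.I * (β n : ℂ)) * (Real.sin (β n * ℓ) : ℝ)
            - (Real.sin (β n) : ℝ)))
    (hC : ∀ n, C n = ((1/(2*(β n)^2) * Real.sin (β n) : ℝ) : ℂ)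
        - (((1/2) * Real.sin (β n) : ℝ) + (1/2) * (-1 + Complex.I) * (Real.cos (β n) : ℝ))
            * (Real.sin (β n * ℓ) : ℝ)
        + ((1/(2*β n) * Real.cos (β n) * Real.cos (β n * ℓ) : ℝ) : ℂ))
    (hF : ∀ n, F n = Complex.exp (-Complex.I * (β n : ℂ)) * ((Real.cos (β n) : ℝ) - 1)
        - ((Real.sin (β n) * Real.sin (β n * ℓ) : ℝ) : ℂ))
    (hG : ∀ n, G n = Complex.exp (-Complex.I * (β n : ℂ))
            * (((Real.cos (β n) / Real.sin (β n) : ℝ) : ℂ) - 2*Complex.I)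
        - ((Real.cos (β n) * Real.sin (β n * ℓ) : ℝ) : ℂ)
        - Complex.I * Complex.exp (-Complex.I * (β n : ℂ)) * (Real.cos (β n * ℓ) : ℝ))
    (hH : ∀ n, H n = -((1/(2*β n) : ℝ) : ℂ) * Complex.exp (-Complex.I * (β n : ℂ))
        - ((1/(2*β n) * Real.cos (β n) * Real.sin (β n * ℓ) : ℝ) : ℂ)
        - (((1/2) * Real.sin (β n) * Real.cos (β n * ℓ) : ℝ) : ℂ)
        - (1/2) * (-1 + Complex.I) * ((Real.cos (β n) * Real.cos (β n * ℓ) : ℝ) : ℂ)) :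
    Tendsto (fun n => (((q n : ℝ) ^ ((1/4 : ℝ)) : ℝ) : ℂ) * A n) atTop
        (nhds ((2*π*(2 + ℓ) : ℝ) : ℂ))
    ∧ Tendsto B atTop (nhds 1)
    ∧ Tendsto (fun n => (((q n : ℝ) ^ ((1/4 : ℝ)) : ℝ) : ℂ) * C n) atTop
        (nhds ((1 - Complex.I) * ((π*ℓ : ℝ) : ℂ)))
    ∧ Tendsto (fun n => (((q n : ℝ) ^ ((1/2 : ℝ)) : ℝ) : ℂ) * F n) atTop
        (nhds ((-2*π^2*(2*ℓ + 1) : ℝ) : ℂ))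
    ∧ Tendsto (fun n => G n - (((q n : ℝ) ^ ((1/4 : ℝ)) : ℝ) : ℂ)/(2*π)) atTop
        (nhds (-4*Complex.I))
    ∧ Tendsto H atTop (nhds ((1 - Complex.I)/2)) := by
  have h := SmallAngleScaling.of_abs_sub_lt_inv hqtop happrox hβ
  have hqβ (n : ℕ) : 2 * π * q n ≤ β n := by
    rw [hβ, le_add_iff_nonneg_right]
    positivity
  have htβ := tendsto_rpow_div_of_mul_le (by norm_num : (1/4 : ℝ) < 1) two_pi_pos hqtop hqβ
  have hβtop : Tendsto β atTop atTop := tendsto_atTop_mono hqβ (hqtop.const_mul_atTop two_pi_pos)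
  have hsq (n : ℕ) : (q n : ℝ) ^ (1/2 : ℝ) = ((q n : ℝ) ^ (1/4 : ℝ)) ^ 2 := by
    rw [← rpow_natCast, ← rpow_mul (Nat.cast_nonneg _)]
    norm_num
  refine ⟨h.tendsto_mul_A.congr fun n => ?_, h.tendsto_B.congr fun n => ?_,
    (h.tendsto_mul_C hβtop htβ).congr fun n => ?_, h.tendsto_sq_mul_F.congr fun n => ?_,
    h.tendsto_G_sub.congr fun n => ?_, (h.tendsto_H hβtop).congr fun n => ?_⟩ <;>
  simp only [hsq, hA, hB, hC, hF, hG, hH, Real.sin_sub_nat_mul_two_pi, Real.cos_sub_nat_mul_two_pi,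
    Complex.exp_neg_I_mul_sub_nat_mul_two_pi]

/-- asymptotics of the coefficients `A, B, C, F, G, H` appearing in the
non-exponential-stability proof for the circuit, along `β_n = 2π q_n + 2π q_n^{−1/4}`. -/
theorem stmt_7 (ℓ : ℝ) (hℓ : 0 < ℓ) (hirr : Irrational ℓ)
    (p q : ℕ → ℕ) (hp : ∀ n, 0 < p n) (hq : ∀ n, 0 < q n)
    (hqtop : Tendsto (fun n => (q n : ℝ)) atTop atTop)
    (happrox : ∀ n, |(q n : ℝ) * ℓ - (p n : ℝ)| < 1 / (q n : ℝ))
    (β : ℕ → ℝ)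
    (hβ : ∀ n, β n = 2*π*(q n : ℝ) + 2*π*((q n : ℝ) ^ (-(1/4 : ℝ))))
    (A B C F G H : ℕ → ℂ)
    (hA : ∀ n, A n = ((1 + Real.cos (β n * ℓ)) * Real.sin (β n) : ℝ)
        + Complex.exp (-Complex.I * (β n : ℂ)) * (Real.sin (β n * ℓ) : ℝ))
    (hB : ∀ n, B n = 2 - ((Real.cos (β n * ℓ) * Real.cos (β n) : ℝ) : ℂ)
        + Complex.I * (Complex.exp (-Complex.I * (β n : ℂ)) * (Real.sin (β n * ℓ) : ℝ)
            - (Real.sin (β n) : ℝ)))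
    (hC : ∀ n, C n = ((1/(2*(β n)^2) * Real.sin (β n) : ℝ) : ℂ)
        - (((1/2) * Real.sin (β n) : ℝ) + (1/2) * (-1 + Complex.I) * (Real.cos (β n) : ℝ))
            * (Real.sin (β n * ℓ) : ℝ)
        + ((1/(2*β n) * Real.cos (β n) * Real.cos (β n * ℓ) : ℝ) : ℂ))
    (hF : ∀ n, F n = Complex.exp (-Complex.I * (β n : ℂ)) * ((Real.cos (β n) : ℝ) - 1)
        - ((Real.sin (β n) * Real.sin (β n * ℓ) : ℝ) : ℂ))
    (hG : ∀ n, G n = Complex.exp (-Complex.I * (β n : ℂ))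
            * (((Real.cos (β n) / Real.sin (β n) : ℝ) : ℂ) - 2*Complex.I)
        - ((Real.cos (β n) * Real.sin (β n * ℓ) : ℝ) : ℂ)
        - Complex.I * Complex.exp (-Complex.I * (β n : ℂ)) * (Real.cos (β n * ℓ) : ℝ))
    (hH : ∀ n, H n = -((1/(2*β n) : ℝ) : ℂ) * Complex.exp (-Complex.I * (β n : ℂ))
        - ((1/(2*β n) * Real.cos (β n) * Real.sin (β n * ℓ) : ℝ) : ℂ)
        - (((1/2) * Real.sin (β n) * Real.cos (β n * ℓ) : ℝ) : ℂ)
        - (1/2) * (-1 + Complex.I) * ((Real.cos (β n) * Real.cos (β n * ℓ) : ℝ) : ℂ)) :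
    Tendsto (fun n => (((q n : ℝ) ^ ((1/4 : ℝ)) : ℝ) : ℂ) * A n) atTop
        (nhds ((2*π*(2 + ℓ) : ℝ) : ℂ))
    ∧ Tendsto B atTop (nhds 1)
    ∧ Tendsto (fun n => (((q n : ℝ) ^ ((1/4 : ℝ)) : ℝ) : ℂ) * C n) atTop
        (nhds ((1 - Complex.I) * ((π*ℓ : ℝ) : ℂ)))
    ∧ Tendsto (fun n => (((q n : ℝ) ^ ((1/2 : ℝ)) : ℝ) : ℂ) * F n) atTop
        (nhds ((-2*π^2*(2*ℓ + 1) : ℝ) : ℂ))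
    ∧ Tendsto (fun n => G n - (((q n : ℝ) ^ ((1/4 : ℝ)) : ℝ) : ℂ)/(2*π)) atTop
        (nhds (-4*Complex.I))
    ∧ Tendsto H atTop (nhds ((1 - Complex.I)/2)) :=
  stmt_7_general ℓ p q hqtop happrox β hβ A B C F G H hA hB hC hF hG hH
end

section
/- Let x : ℕ → ℝ and c : ℕ → ℝ, and define sequences Δ, M by Δ₂ := sin x₂, M₂ := −cos x₂, and for N ≥ 3: Δ_N := (−cos x_N + c_N sin x_N) Δ_{N−1} + (sin x_N) M_{N−1} and M_N := (−sin x_N − c_N cos x_N) Δ_{N−1} − (cos x_N) M_{N−1}. Then for every N ≥ 2, Δ_N = Σ_{s=0}^{N−2} (−1)^{N+s} Σ_{2 = j₀ < j₁ < ⋯ < j_s ≤ N} ( ∏_{i=0}^{s−1} c_{j_{i+1}} · sin( x_{j_i} + x_{j_i + 1} + ⋯ + x_{j_{i+1} − 1} ) ) · sin( x_{j_s} + x_{j_s + 1} + ⋯ + x_N ), where the inner sum is over all strictly increasing integer tuples (j₀, j₁, …, j_s) with j₀ = 2 and j_s ≤ N, the empty product (s = 0) equals 1, and the s = 0 term is (−1)^N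 sin( x₂ + ⋯ + x_N ). -/
/-!
Write `F_f(N)` for the right-hand side with the outer `sin` replaced by an arbitrary function
`f`. Splitting the tuples for `N + 1` according to whether `j_s = N + 1` gives
`F_f(N+1) = -F_{f(· + x_{N+1})}(N) + c_{N+1} f(x_{N+1}) F_sin(N)`: a tuple with `j_s ≤ N` only
lengthens its last block by `x_{N+1}` (and the sign flips), while one with `j_s = N + 1` is a
tuple for `N` with `N + 1` appended. As `F_f` is linear in `f`, the addition formulas for `sin`
and `cos` turn this into the recursion defining `(Δ, M)`, so `Δ_N = F_sin(N)` and
`M_N = -F_cos(N)` by induction.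
-/

open Real Finset

/-- The pair `(Δ_N, M_N)` defined by `Δ₂ = sin x₂`, `M₂ = −cos x₂` and the recursion
`Δ_N = (−cos x_N + c_N sin x_N) Δ_{N−1} + (sin x_N) M_{N−1}`,
`M_N = (−sin x_N − c_N cos x_N) Δ_{N−1} − (cos x_N) M_{N−1}`. -/
noncomputable def DeltaM (x c : ℕ → ℝ) : ℕ → ℝ × ℝ
  | 0 => (0, 0)
  | 1 => (0, 0)
  | 2 => (Real.sin (x 2), -Real.cos (x 2))
  | (n + 3) =>
      let pr := DeltaM x c (n + 2)
      ((-Real.cos (x (n + 3)) + c (n + 3) * Real.sin (x (n + 3))) * pr.1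
          + Real.sin (x (n + 3)) * pr.2,
       (-Real.sin (x (n + 3)) - c (n + 3) * Real.cos (x (n + 3))) * pr.1
          - Real.cos (x (n + 3)) * pr.2)

open scoped Classical in
/-- Strictly increasing tuples `2 = j₀ < j₁ < ⋯ < j_s ≤ N`. -/
noncomputable def incrTuples (s N : ℕ) : Finset (Fin (s + 1) → Fin (N + 1)) :=
  Finset.univ.filter (fun j => StrictMono j ∧ (j 0 : ℕ) = 2)

section Tuples

variable {s N : ℕ}

lemma mem_incrTuples {j : Fin (s + 1) → Fin (N + 1)} :
    j ∈ incrTuples s N ↔ StrictMono j ∧ (j 0 : ℕ) = 2 := by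
  simp [incrTuples]

lemma incrTuples_eq_empty (h : N < s + 2) : incrTuples s N = ∅ := by
  refine eq_empty_of_forall_notMem fun j hj => ?_
  obtain ⟨hmono, h0⟩ := mem_incrTuples.1 hj
  let v : Fin (s + 1) ↪ ℕ := ⟨fun i => j i, Fin.val_injective.comp hmono.injective⟩
  have hsub : univ.map v ⊆ Icc 2 N := by
    simp only [subset_iff, mem_map, mem_univ, true_and, mem_Icc, forall_exists_index,
      forall_apply_eq_imp_iff]
    intro i
    have := Fin.le_def.1 (hmono.monotone (Fin.zero_le i))
    have := (j i).isLt
    exact ⟨by simp [v]; omega, by simp [v]; omega⟩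
  have := card_le_card hsub
  simp at this
  omega

lemma incrTuples_zero (hN : 2 ≤ N) : incrTuples 0 N = {fun _ => ⟨2, by omega⟩} := by
  ext j
  have : StrictMono j := Subsingleton.strictMono (α := Fin 1) j
  simp [mem_incrTuples, this, funext_iff, Fin.ext_iff, Fin.forall_fin_one]

lemma sum_incrTuples_filter_ne_last {M : Type*} [AddCommMonoid M]
    (g : (Fin (s + 1) → Fin (N + 2)) → M) :
    ∑ j ∈ (incrTuples s (N + 1)).filter (fun j => j (Fin.last s) ≠ Fin.last (N + 1)), g j
      = ∑ j ∈ incrTuples s N, g (Fin.castSucc ∘ j) := by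
  symm
  refine sum_nbij (Fin.castSucc ∘ ·) (fun j hj => ?_)
    ((Fin.castSucc_injective _).comp_left.injOn) (fun j hj => ?_) (fun _ _ => rfl)
  · obtain ⟨hmono, h0⟩ := mem_incrTuples.1 hj
    refine mem_filter.2 ⟨mem_incrTuples.2 ⟨Fin.strictMono_castSucc.comp hmono, h0⟩, ?_⟩
    exact Fin.castSucc_ne_last _
  · obtain ⟨hj, hne⟩ := mem_filter.1 hj
    obtain ⟨hmono, h0⟩ := mem_incrTuples.1 hj
    have hlt : ∀ i, j i ≠ Fin.last (N + 1) := fun i =>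
      ((hmono.monotone (Fin.le_last i)).trans_lt (Fin.lt_last_iff_ne_last.2 hne)).ne
    refine ⟨fun i => (j i).castPred (hlt i), mem_incrTuples.2 ⟨fun a b hab => ?_, h0⟩, ?_⟩
    · exact Fin.castPred_lt_castPred_iff.2 (hmono hab)
    · funext i
      exact Fin.castSucc_castPred _ _

lemma sum_incrTuples_filter_eq_last {M : Type*} [AddCommMonoid M]
    (g : (Fin (s + 2) → Fin (N + 2)) → M) :
    ∑ j ∈ (incrTuples (s + 1) (N + 1)).filter
        (fun j => j (Fin.last (s + 1)) = Fin.last (N + 1)), g j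
      = ∑ j ∈ incrTuples s N, g (Fin.snoc (Fin.castSucc ∘ j) (Fin.last (N + 1))) := by
  symm
  refine sum_nbij (fun j => Fin.snoc (Fin.castSucc ∘ j) (Fin.last (N + 1))) (fun j hj => ?_)
    (fun j _ k _ hjk => ?_) (fun j hj => ?_) (fun _ _ => rfl)
  · obtain ⟨hmono, h0⟩ := mem_incrTuples.1 hj
    have hsnoc : StrictMono (Fin.snoc (Fin.castSucc ∘ j) (Fin.last (N + 1)) :
        Fin (s + 2) → Fin (N + 2)) := by
      rw [← Fin.insertNth_last', Fin.strictMono_insertNth_iff]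
      exact ⟨Fin.strictMono_castSucc.comp hmono, fun i _ => Fin.castSucc_lt_last _,
        fun i hi => absurd hi (Fin.castSucc_lt_last i).not_ge⟩
    refine mem_filter.2 ⟨mem_incrTuples.2 ⟨hsnoc, ?_⟩, Fin.snoc_last _ _⟩
    rw [← Fin.castSucc_zero, Fin.snoc_castSucc]
    exact h0
  · have := congrArg Fin.init hjk
    simp only [Fin.init_snoc] at this
    exact (Fin.castSucc_injective _).comp_left this
  · obtain ⟨hj, hlast⟩ := mem_filter.1 hj
    obtain ⟨hmono, h0⟩ := mem_incrTuples.1 hj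
    have hlt : ∀ i : Fin (s + 1), j i.castSucc ≠ Fin.last (N + 1) := fun i =>
      hlast ▸ (hmono (Fin.castSucc_lt_last i)).ne
    refine ⟨fun i => (j i.castSucc).castPred (hlt i),
      mem_incrTuples.2 ⟨fun a b hab => ?_, h0⟩, ?_⟩
    · exact Fin.castPred_lt_castPred_iff.2 (hmono (Fin.castSucc_lt_castSucc_iff.2 hab))
    · conv_rhs => rw [← Fin.snoc_init_self j, hlast]
      congr 1

end Tuples

section Expansion

variable (x c : ℕ → ℝ)

noncomputable def chainWeight {s N : ℕ} (j : Fin (s + 1) → Fin (N + 1)) : ℝ :=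
  ∏ i : Fin s, c (j i.succ) * sin (∑ m ∈ Icc (j i.castSucc : ℕ) ((j i.succ : ℕ) - 1), x m)

noncomputable def chainExpansion (f : ℝ → ℝ) (N : ℕ) : ℝ :=
  ∑ s ∈ range (N - 1), (-1 : ℝ) ^ (N + s) *
    ∑ j ∈ incrTuples s N, chainWeight x c j * f (∑ m ∈ Icc (j (Fin.last s) : ℕ) N, x m)

variable {x c}

lemma chainWeight_castSucc_comp {s N : ℕ} (j : Fin (s + 1) → Fin (N + 1)) :
    chainWeight x c (Fin.castSucc ∘ j) = chainWeight x c j := rfl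

lemma chainWeight_snoc {s N : ℕ} (j : Fin (s + 1) → Fin (N + 1)) :
    chainWeight x c (Fin.snoc (Fin.castSucc ∘ j) (Fin.last (N + 1)) : Fin (s + 2) → _) =
      chainWeight x c j * (c (N + 1) * sin (∑ m ∈ Icc (j (Fin.last s) : ℕ) N, x m)) := by
  simp only [chainWeight, Fin.prod_univ_castSucc, Fin.succ_castSucc, Fin.succ_last,
    Fin.snoc_castSucc, Fin.snoc_last, Function.comp_apply, Fin.val_castSucc, Fin.val_last,
    add_tsub_cancel_right]

variable (x c) in
lemma chainExpansion_linear_comb (a b : ℝ) (f g : ℝ → ℝ) (N : ℕ) :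
    chainExpansion x c (fun t => a * f t + b * g t) N =
      a * chainExpansion x c f N + b * chainExpansion x c g N := by
  simp only [chainExpansion, mul_sum, ← sum_add_distrib]
  exact sum_congr rfl fun s _ => sum_congr rfl fun j _ => by ring

lemma chainExpansion_two (f : ℝ → ℝ) : chainExpansion x c f 2 = f (x 2) := by
  simp [chainExpansion, incrTuples_zero le_rfl, chainWeight]

lemma sum_chainWeight_filter_ne_last (f : ℝ → ℝ) (s N : ℕ) :
    ∑ j ∈ (incrTuples s (N + 1)).filter (fun j => j (Fin.last s) ≠ Fin.last (N + 1)),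
        chainWeight x c j * f (∑ m ∈ Icc (j (Fin.last s) : ℕ) (N + 1), x m)
      = ∑ j ∈ incrTuples s N,
        chainWeight x c j * f ((∑ m ∈ Icc (j (Fin.last s) : ℕ) N, x m) + x (N + 1)) := by
  rw [sum_incrTuples_filter_ne_last]
  refine sum_congr rfl fun j _ => ?_
  rw [chainWeight_castSucc_comp, Function.comp_apply, Fin.val_castSucc,
    sum_Icc_succ_top (by omega)]

lemma sum_chainWeight_filter_eq_last (f : ℝ → ℝ) (s N : ℕ) :
    ∑ j ∈ (incrTuples (s + 1) (N + 1)).filter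
        (fun j => j (Fin.last (s + 1)) = Fin.last (N + 1)),
        chainWeight x c j * f (∑ m ∈ Icc (j (Fin.last (s + 1)) : ℕ) (N + 1), x m)
      = c (N + 1) * f (x (N + 1)) * ∑ j ∈ incrTuples s N,
        chainWeight x c j * sin (∑ m ∈ Icc (j (Fin.last s) : ℕ) N, x m) := by
  rw [sum_incrTuples_filter_eq_last, mul_sum]
  refine sum_congr rfl fun j _ => ?_
  rw [chainWeight_snoc, Fin.snoc_last, Fin.val_last, Icc_self, sum_singleton]
  ring

lemma chainExpansion_succ (f : ℝ → ℝ) {N : ℕ} (hN : 2 ≤ N) :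
    chainExpansion x c f (N + 1) =
      -chainExpansion x c (fun t => f (t + x (N + 1))) N +
        c (N + 1) * f (x (N + 1)) * chainExpansion x c sin N := by
  obtain ⟨n, rfl⟩ := Nat.exists_eq_add_of_le' hN
  have hsplit : ∀ s, ∑ j ∈ incrTuples s (n + 3),
      chainWeight x c j * f (∑ m ∈ Icc (j (Fin.last s) : ℕ) (n + 3), x m) = _ := fun s =>
    (sum_filter_not_add_sum_filter _ (fun j => j (Fin.last s) = Fin.last (n + 3)) _).symm
  simp only [chainExpansion, hsplit, mul_add, sum_add_distrib, sum_chainWeight_filter_ne_last]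
  rw [show n + 2 + 1 - 1 = n + 1 + 1 by omega, show n + 2 - 1 = n + 1 by omega]
  congr 1
  · rw [sum_range_succ, incrTuples_eq_empty (by omega : n + 2 < n + 1 + 2), sum_empty, mul_zero,
      add_zero, ← sum_neg_distrib]
    exact sum_congr rfl fun s _ => by ring
  · rw [sum_range_succ', incrTuples_zero (by omega), filter_singleton,
      if_neg (by simp [Fin.ext_iff]), sum_empty, mul_zero, add_zero, mul_sum]
    refine sum_congr rfl fun s _ => ?_
    rw [sum_chainWeight_filter_eq_last]
    ring

lemma chainExpansion_sin_add (y : ℝ) (N : ℕ) :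
    chainExpansion x c (fun t => sin (t + y)) N =
      cos y * chainExpansion x c sin N + sin y * chainExpansion x c cos N := by
  rw [← chainExpansion_linear_comb]
  congr with t
  rw [sin_add]
  ring

lemma chainExpansion_cos_add (y : ℝ) (N : ℕ) :
    chainExpansion x c (fun t => cos (t + y)) N =
      cos y * chainExpansion x c cos N - sin y * chainExpansion x c sin N := by
  rw [sub_eq_add_neg, ← neg_mul, ← chainExpansion_linear_comb]
  congr with t
  rw [cos_add]
  ring

theorem DeltaM_eq_chainExpansion (n : ℕ) :
    (DeltaM x c (n + 2)).1 = chainExpansion x c sin (n + 2) ∧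
      (DeltaM x c (n + 2)).2 = -chainExpansion x c cos (n + 2) := by
  induction n with
  | zero => simp [DeltaM, chainExpansion_two]
  | succ n ih =>
    obtain ⟨hΔ, hM⟩ := ih
    have hN : 2 ≤ n + 2 := by omega
    simp only [DeltaM, hΔ, hM]
    rw [chainExpansion_succ _ hN, chainExpansion_succ _ hN, chainExpansion_sin_add,
      chainExpansion_cos_add]
    constructor <;> ring

end Expansion

/-- the closed-form expansion of `Δ_N` as a signed sum over strictly
increasing tuples `2 = j₀ < j₁ < ⋯ < j_s ≤ N`. -/
theorem stmt_9 (x c : ℕ → ℝ) :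
    ∀ N : ℕ, 2 ≤ N →
      (DeltaM x c N).1 =
        ∑ s ∈ Finset.range (N - 1), (-1 : ℝ)^(N + s) *
          ∑ j ∈ incrTuples s N,
            (∏ i : Fin s, c (j i.succ) *
                Real.sin (∑ m ∈ Finset.Icc (j i.castSucc : ℕ) ((j i.succ : ℕ) - 1), x m))
              * Real.sin (∑ m ∈ Finset.Icc (j (Fin.last s) : ℕ) N, x m) := by
  intro N hN
  obtain ⟨n, rfl⟩ := Nat.exists_eq_add_of_le' hN
  exact (DeltaM_eq_chainExpansion n).1
end

section
/- Let N ≥ 2, x : ℕ → ℝ, c : ℕ → ℝ. Let S_N be the 2(N−1) × 2(N−1) real matrix whose entries are all zero except: row 1 has entry 1 in column 1; for each j = 2, …, N−1, row 2(j−1) has entries cos x_j, sin x_j, −1 in columns 2j−3, 2j−2, 2j−1 respectively, and row 2j−1 has entries sin x_j, −cos x_j, c_{j+1}, 1 in columns 2j−3, 2j−2, 2j−1, 2j respectively; and row 2(N−1) has entries cos x_N, sin x_N in columns 2N−3, 2N−2. Let S̃_N be the same matrix except that its last row has entries sin x_N, −cos x_N in columns 2N−3, 2N−2. Define Δ, M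 by Δ₂ := sin x₂, M₂ := −cos x₂, and for N ≥ 3: Δ_N := (−cos x_N + c_N sin x_N) Δ_{N−1} + (sin x_N) M_{N−1}, M_N := (−sin x_N − c_N cos x_N) Δ_{N−1} − (cos x_N) M_{N−1}. Then det S_N = Δ_N and det S̃_N = M_N for every N ≥ 2. -/
open Real

/-- Entry of the matrix `S_N` in row `r`, column `k` (both 1-indexed, `1 ≤ r, k ≤ 2(N−1)`):
row `1` has a `1` in column `1`; for `j = 2, …, N−1`, row `2(j−1)` has `cos x_j, sin x_j, −1`
in columns `2j−3, 2j−2, 2j−1`, and row `2j−1` has `sin x_j, −cos x_j, c_{j+1}, 1` in columns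
`2j−3, 2j−2, 2j−1, 2j`; the last row `2(N−1)` has `cos x_N, sin x_N` in columns
`2N−3, 2N−2`. -/
noncomputable def Sentry (N : ℕ) (x c : ℕ → ℝ) (r k : ℕ) : ℝ :=
  if r = 1 then (if k = 1 then 1 else 0)
  else if r = 2*(N - 1) then
    (if k = 2*N - 3 then Real.cos (x N) else if k = 2*N - 2 then Real.sin (x N) else 0)
  else if r % 2 = 0 then
    (if k = 2*(r/2 + 1) - 3 then Real.cos (x (r/2 + 1))
     else if k = 2*(r/2 + 1) - 2 then Real.sin (x (r/2 + 1))
     else if k = 2*(r/2 + 1) - 1 then -1 else 0)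
  else
    (if k = 2*((r + 1)/2) - 3 then Real.sin (x ((r + 1)/2))
     else if k = 2*((r + 1)/2) - 2 then -Real.cos (x ((r + 1)/2))
     else if k = 2*((r + 1)/2) - 1 then c ((r + 1)/2 + 1)
     else if k = 2*((r + 1)/2) then 1 else 0)

/-- The matrix `S_N`. -/
noncomputable def SMat (N : ℕ) (x c : ℕ → ℝ) :
    Matrix (Fin (2*(N - 1))) (Fin (2*(N - 1))) ℝ :=
  fun r k => Sentry N x c ((r : ℕ) + 1) ((k : ℕ) + 1)

/-- The matrix `S̃_N`: same as `S_N` except that the last row has entries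
`sin x_N, −cos x_N` in columns `2N−3, 2N−2`. -/
noncomputable def SMatTilde (N : ℕ) (x c : ℕ → ℝ) :
    Matrix (Fin (2*(N - 1))) (Fin (2*(N - 1))) ℝ :=
  fun r k =>
    if (r : ℕ) + 1 = 2*(N - 1) then
      (if (k : ℕ) + 1 = 2*N - 3 then Real.sin (x N)
       else if (k : ℕ) + 1 = 2*N - 2 then -Real.cos (x N) else 0)
    else Sentry N x c ((r : ℕ) + 1) ((k : ℕ) + 1)

/-
`S_{N+1}` is `S_N` bordered by two rows and two columns: its new columns are
`(−e, c_{N+1}, ·)` and `(0, 1, ·)`, and the first new row restricted to the old columns is the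
last row of `S̃_N`. Expanding along the last column, then along the last column or last row of the
two minors, gives `det S_{N+1} = sin x_{N+1} (c_{N+1} det S_N + det S̃_N) − cos x_{N+1} det S_N`,
and the same with `(cos, sin)` replaced by `(sin, −cos)` for `S̃_{N+1}`, whose last row is the only
difference. This is the recursion defining `(Δ, M)`.
-/

namespace Matrix

variable {R : Type*} [CommRing R] {n : ℕ}

theorem det_succ_column_last_of_eq_zero (B : Matrix (Fin (n + 2)) (Fin (n + 2)) R)
    (h : ∀ i : Fin n, B i.castSucc.castSucc (Fin.last _) = 0) :
    B.det = B (Fin.last _) (Fin.last _) * (B.submatrix Fin.castSucc Fin.castSucc).det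
      - B (Fin.last n).castSucc (Fin.last _) *
          (B.submatrix (Fin.last n).castSucc.succAbove Fin.castSucc).det := by
  rw [det_succ_column B (Fin.last _), Fin.sum_univ_castSucc, Fin.sum_univ_castSucc,
    Finset.sum_eq_zero fun i _ => by rw [h i, mul_zero, zero_mul]]
  have hodd : (-1 : R) ^ (n + (n + 1)) = -1 := Odd.neg_one_pow ⟨n, by ring⟩
  have heven : (-1 : R) ^ (n + 1 + (n + 1)) = 1 := Even.neg_one_pow ⟨n + 1, rfl⟩
  simp only [Fin.val_castSucc, Fin.val_last, Fin.succAbove_last, hodd, heven]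
  ring

theorem det_succ_row_last_of_eq_zero (B : Matrix (Fin (n + 1)) (Fin (n + 1)) R)
    (h : ∀ j : Fin n, B (Fin.last n) j.castSucc = 0) :
    B.det = B (Fin.last n) (Fin.last n) * (B.submatrix Fin.castSucc Fin.castSucc).det := by
  rw [det_succ_row B (Fin.last n), Fin.sum_univ_castSucc,
    Finset.sum_eq_zero fun j _ => by rw [h j, mul_zero, zero_mul]]
  have heven : (-1 : R) ^ (n + n) = 1 := Even.neg_one_pow ⟨n, rfl⟩
  simp only [Fin.val_last, Fin.succAbove_last, heven]
  ring

/-- `B` has the block form `[[A, -e, 0], [r, c, 1], [*, *, *]]`, with `e` the last unit vector;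
its last row is replaced by `v = (0, p, q)`. -/
theorem det_updateRow_last_of_border {m : ℕ} (B : Matrix (Fin (m + 3)) (Fin (m + 3)) R)
    (A : Matrix (Fin (m + 1)) (Fin (m + 1)) R) (r : Fin (m + 1) → R) (c : R)
    (hA : ∀ i j : Fin (m + 1), B i.castSucc.castSucc j.castSucc.castSucc = A i j)
    (hcol₁ : ∀ i : Fin m, B i.castSucc.castSucc.castSucc (Fin.last (m + 1)).castSucc = 0)
    (hneg : B (Fin.last m).castSucc.castSucc (Fin.last (m + 1)).castSucc = -1)
    (hcol₂ : ∀ i : Fin (m + 1), B i.castSucc.castSucc (Fin.last (m + 2)) = 0)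
    (hrow : ∀ j : Fin (m + 1), B (Fin.last (m + 1)).castSucc j.castSucc.castSucc = r j)
    (hc : B (Fin.last (m + 1)).castSucc (Fin.last (m + 1)).castSucc = c)
    (hone : B (Fin.last (m + 1)).castSucc (Fin.last (m + 2)) = 1)
    (v : Fin (m + 3) → R) (hv : ∀ j : Fin (m + 1), v j.castSucc.castSucc = 0) :
    (B.updateRow (Fin.last _) v).det =
      v (Fin.last _) * (c * A.det + (A.updateRow (Fin.last m) r).det)
        - v (Fin.last (m + 1)).castSucc * A.det := by
  have hB' : ∀ i j, B.updateRow (Fin.last _) v (Fin.castSucc i) j = B i.castSucc j :=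
    fun i j => by rw [updateRow_ne (Fin.castSucc_lt_last i).ne]
  set B' := B.updateRow (Fin.last _) v
  set C := B'.submatrix Fin.castSucc Fin.castSucc
  have hCA : C.submatrix Fin.castSucc Fin.castSucc = A := by
    ext i j; simp [C, hB', hA]
  have hC : C.det = c * A.det + (A.updateRow (Fin.last m) r).det := by
    have hU : C.submatrix (Fin.last m).castSucc.succAbove Fin.castSucc =
        A.updateRow (Fin.last m) r := by
      ext i j
      induction i using Fin.lastCases with
      | last => simp [C, hB', hrow]
      | cast i =>
        simp [C, hB', hA, Fin.succAbove_castSucc_of_lt _ _ (Fin.castSucc_lt_last i),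
          (Fin.castSucc_lt_last i).ne]
    rw [det_succ_column_last_of_eq_zero C (fun i => by simp [C, hB', hcol₁]), hCA, hU]
    simp [C, hB', hc, hneg]
  have hD : (B'.submatrix (Fin.last (m + 1)).castSucc.succAbove Fin.castSucc).det =
      v (Fin.last (m + 1)).castSucc * A.det := by
    rw [det_succ_row_last_of_eq_zero _ (fun j => by simp [B', hv])]
    have hDA : (B'.submatrix (Fin.last (m + 1)).castSucc.succAbove Fin.castSucc).submatrix
        Fin.castSucc Fin.castSucc = A := by
      ext i j
      simp [hB', hA, Fin.succAbove_castSucc_of_lt _ _ (Fin.castSucc_lt_last i)]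
    simp [hDA, B']
  rw [det_succ_column_last_of_eq_zero B' (fun i => by simp [hB', hcol₂]), hC, hD]
  simp [B', hB', hone]

end Matrix

open Matrix

section

variable (x c : ℕ → ℝ) (k : ℕ)

theorem SMatTilde_eq_updateRow (N : ℕ) (i : Fin (2 * (N - 1)))
    (hi : (i : ℕ) + 1 = 2 * (N - 1)) :
    SMatTilde N x c = (SMat N x c).updateRow i (SMatTilde N x c i) := by
  ext r j
  rw [updateRow_apply]
  split_ifs with hr
  · rw [hr]
  · have hr' : (r : ℕ) + 1 ≠ 2 * (N - 1) := fun h => hr (Fin.ext (by omega))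
    simp only [SMat, SMatTilde, if_neg hr']

theorem SMat_succ_castSucc_castSucc (i j : Fin (2 * k + 2)) :
    SMat (k + 3) x c i.castSucc.castSucc j.castSucc.castSucc = SMat (k + 2) x c i j := by
  have hi := i.isLt
  have hj := j.isLt
  simp only [SMat, Fin.val_castSucc]
  unfold Sentry
  by_cases hlast : (i : ℕ) + 1 = 2 * k + 2
  · have h : ((i : ℕ) + 1) / 2 + 1 = k + 2 := by omega
    simp (disch := omega) only [h, if_pos, if_neg]
  · rw [if_neg (show (i : ℕ) + 1 ≠ 2 * (k + 3 - 1) by omega),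
      if_neg (show (i : ℕ) + 1 ≠ 2 * (k + 2 - 1) by omega)]

theorem SMat_succ_penultCol_of_lt (i : Fin (2 * k + 1)) :
    SMat (k + 3) x c i.castSucc.castSucc.castSucc (Fin.last (2 * k + 2)).castSucc = 0 := by
  have hi := i.isLt
  simp (disch := omega) only [SMat, Sentry, Fin.val_castSucc, Fin.val_last, if_pos, if_neg, ite_self]

theorem SMat_succ_penultCol_last :
    SMat (k + 3) x c (Fin.last (2 * k + 1)).castSucc.castSucc (Fin.last (2 * k + 2)).castSucc =
      -1 := by
  have h : (2 * k + 1 + 1) / 2 + 1 = k + 2 := by omega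
  simp (disch := omega) only [SMat, Sentry, Fin.val_castSucc, Fin.val_last, h, if_pos, if_neg]

theorem SMat_succ_lastCol (i : Fin (2 * k + 2)) :
    SMat (k + 3) x c i.castSucc.castSucc (Fin.last (2 * k + 3)) = 0 := by
  have hi := i.isLt
  simp (disch := omega) only [SMat, Sentry, Fin.val_castSucc, Fin.val_last, if_pos, if_neg, ite_self]

theorem SMat_succ_penultRow (j : Fin (2 * k + 2)) :
    SMat (k + 3) x c (Fin.last (2 * k + 2)).castSucc j.castSucc.castSucc =
      SMatTilde (k + 2) x c (Fin.last (2 * k + 1)) j := by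
  have h : (2 * k + 2 + 1 + 1) / 2 = k + 2 := by omega
  simp (disch := omega) only [SMat, SMatTilde, Sentry, Fin.val_castSucc, Fin.val_last, h,
    if_pos, if_neg]

theorem SMat_succ_penultRow_penultCol :
    SMat (k + 3) x c (Fin.last (2 * k + 2)).castSucc (Fin.last (2 * k + 2)).castSucc =
      c (k + 3) := by
  have h : (2 * k + 2 + 1 + 1) / 2 = k + 2 := by omega
  simp (disch := omega) only [SMat, Sentry, Fin.val_castSucc, Fin.val_last, h, if_pos, if_neg]

theorem SMat_succ_penultRow_lastCol :
    SMat (k + 3) x c (Fin.last (2 * k + 2)).castSucc (Fin.last (2 * k + 3)) = 1 := by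
  simp (disch := omega) only [SMat, Sentry, Fin.val_castSucc, Fin.val_last, if_pos, if_neg]

theorem det_updateRow_SMat_succ (v : Fin (2 * k + 4) → ℝ)
    (hv : ∀ j : Fin (2 * k + 2), v j.castSucc.castSucc = 0) :
    ((SMat (k + 3) x c).updateRow (Fin.last (2 * k + 3)) v).det =
      v (Fin.last (2 * k + 3)) * (c (k + 3) * (SMat (k + 2) x c).det + (SMatTilde (k + 2) x c).det)
        - v (Fin.last (2 * k + 2)).castSucc * (SMat (k + 2) x c).det := by
  rw [SMatTilde_eq_updateRow x c (k + 2) (Fin.last (2 * k + 1)) rfl]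
  exact det_updateRow_last_of_border (m := 2 * k + 1) _ _ _ _
    (SMat_succ_castSucc_castSucc x c k) (SMat_succ_penultCol_of_lt x c k)
    (SMat_succ_penultCol_last x c k) (SMat_succ_lastCol x c k) (SMat_succ_penultRow x c k)
    (SMat_succ_penultRow_penultCol x c k) (SMat_succ_penultRow_lastCol x c k) v hv

theorem det_SMat_succ :
    (SMat (k + 3) x c).det =
      sin (x (k + 3)) * (c (k + 3) * (SMat (k + 2) x c).det + (SMatTilde (k + 2) x c).det)
        - cos (x (k + 3)) * (SMat (k + 2) x c).det := by
  rw [← updateRow_eq_self (SMat (k + 3) x c) (Fin.last (2 * k + 3)), det_updateRow_SMat_succ]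
  · simp (disch := omega) only [SMat, Sentry, Fin.val_castSucc, Fin.val_last, if_pos, if_neg]
  · intro j
    have hj := j.isLt
    simp (disch := omega) only [SMat, Sentry, Fin.val_castSucc, Fin.val_last, if_pos, if_neg]

theorem det_SMatTilde_succ :
    (SMatTilde (k + 3) x c).det =
      -cos (x (k + 3)) * (c (k + 3) * (SMat (k + 2) x c).det + (SMatTilde (k + 2) x c).det)
        - sin (x (k + 3)) * (SMat (k + 2) x c).det := by
  rw [SMatTilde_eq_updateRow x c (k + 3) (Fin.last (2 * k + 3)) rfl, det_updateRow_SMat_succ]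
  · simp (disch := omega) only [SMatTilde, Fin.val_castSucc, Fin.val_last, if_pos, if_neg]
  · intro j
    have hj := j.isLt
    simp (disch := omega) only [SMatTilde, Fin.val_castSucc, Fin.val_last, if_pos, if_neg]

end

/-- `det S_N = Δ_N` and `det S̃_N = M_N` for every `N ≥ 2`. -/
theorem stmt_11 (x c : ℕ → ℝ) (N : ℕ) (hN : 2 ≤ N) :
    Matrix.det (SMat N x c) = (DeltaM x c N).1
      ∧ Matrix.det (SMatTilde N x c) = (DeltaM x c N).2 := by
  obtain ⟨k, rfl⟩ : ∃ k, N = k + 2 := ⟨N - 2, by omega⟩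
  clear hN
  induction k with
  | zero =>
    simp [det_fin_two, SMat, SMatTilde, Sentry, DeltaM]
  | succ k ih =>
    show (SMat (k + 3) x c).det = (DeltaM x c (k + 3)).1
      ∧ (SMatTilde (k + 3) x c).det = (DeltaM x c (k + 3)).2
    rw [det_SMat_succ, det_SMatTilde_succ, ih.1, ih.2]
    constructor <;> simp only [DeltaM] <;> ring
end

section
/- Let N ≥ 2, let ℓ_1, …, ℓ_N > 0, let β be a nonzero real number, and let m_2, …, m_N > 0 satisfy m_j β² ≠ 1 for every j ∈ {2, …, N}. Suppose y_j : [0, ℓ_j] → ℂ are twice continuously differentiable with y_j''(x) + β² y_j(x) = 0 on [0, ℓ_j] for each j ∈ {1, …, N}, and p_j, q_j ∈ ℂ for j ∈ {2, …, N}, satisfying: y_j(0) = y_{j−1}(ℓ_{j−1}) and y_j'(0) − y_{j−1}'(ℓ_{j−1}) = q_j for j ∈ {2, …, N}; q_j = i β p_j and (m_j β² − 1) p_j = i β y_j(0) for j ∈ {2, …, N}; y_1'(0) = i β y_1(0); and y_N(ℓ_N) = 0. Then y_j ≡ 0 on [0, ℓ_j] for every j ∈ {1, …, N}, and p_j = q_j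 = 0 for every j ∈ {2, …, N}. -/
/-!
On each string the flux `Im (conj y · y')` is constant, its derivative being
`Im (|y'|² - β² |y|²) = 0`. At an interior node the point-mass relations make `q_j` a real
multiple of `y_j(0)`, so the flux is continuous across the node as well. The Dirichlet condition
makes it vanish at the last node, hence at the first one, where the feedback condition turns it
into `β |y_1(0)|²`. Thus `y_1(0) = y_1'(0) = 0`, and conservation of the energy
`β² |y|² + |y'|²` carries these zero Cauchy data along the whole chain.
-/

open Set Complex ComplexConjugate

theorem eq_left_of_hasDerivWithinAt_zero {E : Type*} [NormedAddCommGroup E] [NormedSpace ℝ E]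
    {f : ℝ → E} {a b : ℝ} (hf : ∀ x ∈ Icc a b, HasDerivWithinAt f 0 (Icc a b) x) :
    ∀ x ∈ Icc a b, f x = f a :=
  constant_of_has_deriv_right_zero (fun x hx => (hf x hx).continuousWithinAt) fun x hx =>
    (hf x (Ico_subset_Icc_self hx)).mono_of_mem_nhdsWithin <|
      Filter.mem_of_superset (Icc_mem_nhdsGE hx.2) (Icc_subset_Icc_left hx.1)

def HelmholtzOn (β a b : ℝ) (u v : ℝ → ℂ) : Prop :=
  ∀ x ∈ Icc a b, HasDerivWithinAt u (v x) (Icc a b) x ∧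
    HasDerivWithinAt v (-(β : ℂ) ^ 2 * u x) (Icc a b) x

theorem helmholtzOn_of_contDiffOn {β a b : ℝ} {y : ℝ → ℂ} (hab : a < b)
    (hy : ContDiffOn ℝ 2 y (Icc a b))
    (hode : ∀ x ∈ Icc a b,
      derivWithin (derivWithin y (Icc a b)) (Icc a b) x + (β : ℂ) ^ 2 * y x = 0) :
    HelmholtzOn β a b y (derivWithin y (Icc a b)) := by
  have hd : UniqueDiffOn ℝ (Icc a b) := uniqueDiffOn_Icc hab
  have hy' := (hy.derivWithin (m := 1) hd (by norm_num)).differentiableOn one_ne_zero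
  refine fun x hx => ⟨(hy.differentiableOn two_ne_zero x hx).hasDerivWithinAt, ?_⟩
  have hy'' : derivWithin (derivWithin y (Icc a b)) (Icc a b) x = -(β : ℂ) ^ 2 * y x := by
    linear_combination hode x hx
  exact hy'' ▸ (hy' x hx).hasDerivWithinAt

/-- `flux (y x) (y' x)` is the energy flux `Im (conj y · y')` of a string at `x`. -/
def flux (z w : ℂ) : ℝ := (conj z * w).im

namespace HelmholtzOn

variable {β a b : ℝ} {u v : ℝ → ℂ}

theorem flux_eq (h : HelmholtzOn β a b u v) :
    ∀ x ∈ Icc a b, flux (u x) (v x) = flux (u a) (v a) := by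
  refine eq_left_of_hasDerivWithinAt_zero fun x hx => ?_
  obtain ⟨hu, hv⟩ := h x hx
  have := imCLM.hasFDerivAt.comp_hasDerivWithinAt x (hu.star.mul hv)
  convert this using 1
  · rfl
  · simp only [RCLike.star_def, imCLM_apply, ← ofReal_pow, add_im, neg_im, mul_im, mul_re, conj_re,
      conj_im, ofReal_im]
    ring

theorem eq_zero_of_left_eq_zero (h : HelmholtzOn β a b u v) (hβ : β ≠ 0) (hu : u a = 0)
    (hv : v a = 0) : ∀ x ∈ Icc a b, u x = 0 ∧ v x = 0 := by
  have hE : ∀ x ∈ Icc a b, (β : ℂ) ^ 2 * (conj (u x) * u x) + conj (v x) * v x =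
      (β : ℂ) ^ 2 * (conj (u a) * u a) + conj (v a) * v a := by
    refine eq_left_of_hasDerivWithinAt_zero fun x hx => ?_
    obtain ⟨hu, hv⟩ := h x hx
    convert ((hu.star.mul hu).const_mul ((β : ℂ) ^ 2)).add (hv.star.mul hv) using 1
    · rfl
    · simp only [RCLike.star_def, map_mul, map_neg, map_pow, conj_ofReal]
      ring
  intro x hx
  have hE' : β ^ 2 * normSq (u x) + normSq (v x) = 0 := by
    have := hE x hx
    simp only [hu, hv, map_zero, mul_zero, add_zero, ← normSq_eq_conj_mul_self] at this
    exact_mod_cast this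
  have hβ2 : 0 < β ^ 2 := by positivity
  constructor <;> rw [← normSq_eq_zero] <;>
    nlinarith [normSq_nonneg (u x), normSq_nonneg (v x)]

end HelmholtzOn

theorem flux_mul_I_mul_self (β : ℝ) (z : ℂ) : flux z (I * β * z) = β * normSq z := by
  simp only [flux, normSq_apply, mul_im, mul_re, conj_re, conj_im, I_re, I_im, ofReal_re,
    ofReal_im]
  ring

structure IsPointMass (m β : ℝ) (z p q : ℂ) : Prop where
  ne_one : m * β ^ 2 ≠ 1
  q_eq : q = I * β * p
  p_eq : ((m : ℂ) * (β : ℂ) ^ 2 - 1) * p = I * β * z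

namespace IsPointMass

variable {m β : ℝ} {z p q : ℂ}

theorem sub_one_ne_zero (h : IsPointMass m β z p q) : (m : ℂ) * (β : ℂ) ^ 2 - 1 ≠ 0 := by
  exact_mod_cast sub_ne_zero.mpr h.ne_one

theorem q_eq_ofReal_mul (h : IsPointMass m β z p q) :
    q = ((-β ^ 2 / (m * β ^ 2 - 1) : ℝ) : ℂ) * z := by
  apply mul_left_cancel₀ h.sub_one_ne_zero
  push_cast
  rw [← mul_assoc, mul_div_cancel₀ _ h.sub_one_ne_zero]
  linear_combination (m * β ^ 2 - 1 : ℂ) * h.q_eq + I * β * h.p_eq + β ^ 2 * z * I_sq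

theorem flux_add (h : IsPointMass m β z p q) (w : ℂ) : flux z (w + q) = flux z w := by
  rw [h.q_eq_ofReal_mul]
  simp only [flux, mul_add, add_im, mul_im, mul_re, ofReal_re, ofReal_im, conj_re, conj_im]
  ring

theorem eq_zero (h : IsPointMass m β z p q) (hz : z = 0) : p = 0 ∧ q = 0 := by
  have hp : p = 0 := by simpa [hz, h.sub_one_ne_zero] using h.p_eq
  exact ⟨hp, by rw [h.q_eq, hp, mul_zero]⟩

end IsPointMass

section Chain

variable {N : ℕ} {β : ℝ} {ℓ m : ℕ → ℝ} {u v : ℕ → ℝ → ℂ} {p q : ℕ → ℂ}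

theorem flux_eq_flux_one_of_chain (hℓ : ∀ j, 1 ≤ j → j ≤ N → 0 ≤ ℓ j)
    (hH : ∀ j, 1 ≤ j → j ≤ N → HelmholtzOn β 0 (ℓ j) (u j) (v j))
    (hnode : ∀ j, 1 ≤ j → j < N →
      u (j + 1) 0 = u j (ℓ j) ∧ v (j + 1) 0 = v j (ℓ j) + q (j + 1))
    (hmass : ∀ j, 2 ≤ j → j ≤ N → IsPointMass (m j) β (u j 0) (p j) (q j)) :
    ∀ j, 1 ≤ j → j ≤ N → flux (u j 0) (v j 0) = flux (u 1 0) (v 1 0) := by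
  intro j h1
  induction j, h1 using Nat.le_induction with
  | base => exact fun _ => rfl
  | succ j h1 ih =>
    intro hj
    have hj' : j ≤ N := by omega
    obtain ⟨hu0, hv0⟩ := hnode j h1 hj
    rw [hv0, (hmass _ (by omega) hj).flux_add, hu0,
      (hH j h1 hj').flux_eq _ (right_mem_Icc.mpr (hℓ j h1 hj')), ih hj']

theorem eq_zero_of_chain (hβ : β ≠ 0) (hℓ : ∀ j, 1 ≤ j → j ≤ N → 0 ≤ ℓ j)
    (hH : ∀ j, 1 ≤ j → j ≤ N → HelmholtzOn β 0 (ℓ j) (u j) (v j))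
    (hnode : ∀ j, 1 ≤ j → j < N →
      u (j + 1) 0 = u j (ℓ j) ∧ v (j + 1) 0 = v j (ℓ j) + q (j + 1))
    (hmass : ∀ j, 2 ≤ j → j ≤ N → IsPointMass (m j) β (u j 0) (p j) (q j))
    (hu : u 1 0 = 0) (hv : v 1 0 = 0) :
    ∀ j, 1 ≤ j → j ≤ N → ∀ x ∈ Icc 0 (ℓ j), u j x = 0 ∧ v j x = 0 := by
  intro j h1
  induction j, h1 using Nat.le_induction with
  | base => exact fun h1N => (hH 1 le_rfl h1N).eq_zero_of_left_eq_zero hβ hu hv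
  | succ j h1 ih =>
    intro hj
    have hj' : j ≤ N := by omega
    obtain ⟨huℓ, hvℓ⟩ := ih hj' _ (right_mem_Icc.mpr (hℓ j h1 hj'))
    obtain ⟨hu0, hv0⟩ := hnode j h1 hj
    rw [huℓ] at hu0
    have hq0 := ((hmass _ (by omega) hj).eq_zero hu0).2
    exact (hH _ (by omega) hj).eq_zero_of_left_eq_zero hβ hu0 (by rw [hv0, hvℓ, hq0, add_zero])

end Chain
theorem stmt_12_general (N : ℕ)
    (ℓ : ℕ → ℝ) (hℓ : ∀ j, 1 ≤ j → j ≤ N → 0 < ℓ j)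
    (β : ℝ) (hβ : β ≠ 0)
    (m : ℕ → ℝ)
    (hmβ : ∀ j, 2 ≤ j → j ≤ N → m j * β^2 ≠ 1)
    (y : ℕ → ℝ → ℂ)
    (hy : ∀ j, 1 ≤ j → j ≤ N → ContDiffOn ℝ 2 (y j) (Icc 0 (ℓ j)))
    (hode : ∀ j, 1 ≤ j → j ≤ N → ∀ x ∈ Icc (0:ℝ) (ℓ j),
      derivWithin (derivWithin (y j) (Icc 0 (ℓ j))) (Icc 0 (ℓ j)) x
        + (β : ℂ)^2 * y j x = 0)
    (p q : ℕ → ℂ)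
    -- continuity at the interior nodes
    (hcont : ∀ j, 2 ≤ j → j ≤ N → y j 0 = y (j - 1) (ℓ (j - 1)))
    -- jump of the derivatives at the interior nodes
    (hjump : ∀ j, 2 ≤ j → j ≤ N →
      derivWithin (y j) (Icc 0 (ℓ j)) 0
        - derivWithin (y (j - 1)) (Icc 0 (ℓ (j - 1))) (ℓ (j - 1)) = q j)
    -- the point-mass relations
    (hq : ∀ j, 2 ≤ j → j ≤ N → q j = Complex.I * β * p j)
    (hp : ∀ j, 2 ≤ j → j ≤ N → ((m j : ℂ) * (β : ℂ)^2 - 1) * p j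
        = Complex.I * β * y j 0)
    -- dissipative feedback at the first node
    (hfb : derivWithin (y 1) (Icc 0 (ℓ 1)) 0 = Complex.I * β * y 1 0)
    -- Dirichlet condition at the last node
    (hdir : y N (ℓ N) = 0) :
    (∀ j, 1 ≤ j → j ≤ N → ∀ x ∈ Icc (0:ℝ) (ℓ j), y j x = 0)
      ∧ (∀ j, 2 ≤ j → j ≤ N → p j = 0 ∧ q j = 0) := by
  set v := fun j => derivWithin (y j) (Icc 0 (ℓ j))
  have hfb : v 1 0 = I * β * y 1 0 := hfb
  have hℓ' : ∀ j, 1 ≤ j → j ≤ N → 0 ≤ ℓ j := fun j h1 hj => (hℓ j h1 hj).le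
  have hH : ∀ j, 1 ≤ j → j ≤ N → HelmholtzOn β 0 (ℓ j) (y j) (v j) := fun j h1 hj =>
    helmholtzOn_of_contDiffOn (hℓ j h1 hj) (hy j h1 hj) (hode j h1 hj)
  have hnode : ∀ j, 1 ≤ j → j < N →
      y (j + 1) 0 = y j (ℓ j) ∧ v (j + 1) 0 = v j (ℓ j) + q (j + 1) := fun j h1 hj =>
    ⟨by simpa using hcont (j + 1) (by omega) hj,
      eq_add_of_sub_eq' (by simpa using hjump (j + 1) (by omega) hj)⟩
  have hmass : ∀ j, 2 ≤ j → j ≤ N → IsPointMass (m j) β (y j 0) (p j) (q j) :=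
    fun j h2 hj => ⟨hmβ j h2 hj, hq j h2 hj, hp j h2 hj⟩
  have hzero : ∀ j, 1 ≤ j → j ≤ N → ∀ x ∈ Icc 0 (ℓ j), y j x = 0 ∧ v j x = 0 := by
    intro j h1 hj
    have hN : 1 ≤ N := h1.trans hj
    have hflux := (hH N hN le_rfl).flux_eq _ (right_mem_Icc.mpr (hℓ' N hN le_rfl))
    rw [hdir, flux_eq_flux_one_of_chain hℓ' hH hnode hmass N hN le_rfl, hfb,
      flux_mul_I_mul_self] at hflux
    have hy1 : y 1 0 = 0 := by simpa [flux, hβ] using hflux.symm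
    exact eq_zero_of_chain hβ hℓ' hH hnode hmass hy1 (by rw [hfb, hy1, mul_zero]) j h1 hj
  refine ⟨fun j h1 hj x hx => (hzero j h1 hj x hx).1, fun j h2 hj => ?_⟩
  have h1 : 1 ≤ j := by omega
  exact (hmass j h2 hj).eq_zero (hzero j h1 hj 0 (left_mem_Icc.mpr (hℓ' j h1 hj))).1

/-- the eigenvalue problem `A z = i β z` for a chain of `N` strings coupled
through point masses `m_j` at the interior nodes, with dissipative feedback at the first
node and a Dirichlet condition at the last node, has only the trivial solution when
`m_j β² ≠ 1` for all `j`. -/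
theorem stmt_12 (N : ℕ) (hN : 2 ≤ N)
    (ℓ : ℕ → ℝ) (hℓ : ∀ j, 1 ≤ j → j ≤ N → 0 < ℓ j)
    (β : ℝ) (hβ : β ≠ 0)
    (m : ℕ → ℝ) (hm : ∀ j, 2 ≤ j → j ≤ N → 0 < m j)
    (hmβ : ∀ j, 2 ≤ j → j ≤ N → m j * β^2 ≠ 1)
    (y : ℕ → ℝ → ℂ)
    (hy : ∀ j, 1 ≤ j → j ≤ N → ContDiffOn ℝ 2 (y j) (Icc 0 (ℓ j)))
    (hode : ∀ j, 1 ≤ j → j ≤ N → ∀ x ∈ Icc (0:ℝ) (ℓ j),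
      derivWithin (derivWithin (y j) (Icc 0 (ℓ j))) (Icc 0 (ℓ j)) x
        + (β : ℂ)^2 * y j x = 0)
    (p q : ℕ → ℂ)
    -- continuity at the interior nodes
    (hcont : ∀ j, 2 ≤ j → j ≤ N → y j 0 = y (j - 1) (ℓ (j - 1)))
    -- jump of the derivatives at the interior nodes
    (hjump : ∀ j, 2 ≤ j → j ≤ N →
      derivWithin (y j) (Icc 0 (ℓ j)) 0
        - derivWithin (y (j - 1)) (Icc 0 (ℓ (j - 1))) (ℓ (j - 1)) = q j)
    -- the point-mass relations
    (hq : ∀ j, 2 ≤ j → j ≤ N → q j = Complex.I * β * p j)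
    (hp : ∀ j, 2 ≤ j → j ≤ N → ((m j : ℂ) * (β : ℂ)^2 - 1) * p j
        = Complex.I * β * y j 0)
    -- dissipative feedback at the first node
    (hfb : derivWithin (y 1) (Icc 0 (ℓ 1)) 0 = Complex.I * β * y 1 0)
    -- Dirichlet condition at the last node
    (hdir : y N (ℓ N) = 0) :
    (∀ j, 1 ≤ j → j ≤ N → ∀ x ∈ Icc (0:ℝ) (ℓ j), y j x = 0)
      ∧ (∀ j, 2 ≤ j → j ≤ N → p j = 0 ∧ q j = 0) :=
  stmt_12_general N ℓ hℓ β hβ m hmβ y hy hode p q hcont hjump hq hp hfb hdir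
end
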